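/- arXiv:1304.3394 — 10 statements merged into one kernel-verified Lean document; each statement's English description precedes it below -/
import Mathlib

section
/- Let B = b₁…b_{2k} be a compound offspring word of A = a₁…a_{2k} with k ≥ 2. Define n_j = #(b_k b₁…b_j) − #(a₁…a_j) for 1 ≤ j ≤ k−1 and n_j = #(b_{2k} b₁…b_j) − #(a₁…a_j) for k+1 ≤ j ≤ 2k−1, where # counts distinct letters. Then 1 ≥ n₁ ≥ … ≥ n_{k−1} ≥ n_{k+1} − 1 ≥ … ≥ n_{2k−1} − 1. -/
/-- Cyclic predecessor of the (0-indexed) position `j` in a word of length `n`. -/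
def prevIdx (n j : ℕ) : ℕ := if j = 0 then n - 1 else j - 1

/-- `B` is an offspring of `A`, both words of length `n` (given as functions on
0-indexed positions): whenever `a_j = a_k`, the unordered pairs
`(b_{j-1}, b_j)` and `(b_{k-1}, b_k)` coincide (with `b₀ := b_n`, i.e. cyclically). -/
def IsOffspring (n : ℕ) (A B : ℕ → ℕ) : Prop :=
  ∀ j k, j < n → k < n → A j = A k →
    min (B (prevIdx n j)) (B j) = min (B (prevIdx n k)) (B k) ∧
    max (B (prevIdx n j)) (B j) = max (B (prevIdx n k)) (B k)

/-- The map `γ` for words of length `2*m` (0-indexed): cyclic predecessor within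
the own half of the word. -/
def gammaIdx (m j : ℕ) : ℕ := if j = 0 then m - 1 else if j = m then 2*m - 1 else j - 1

/-- `B` is a compound offspring of `A`, both words of length `2*m`: both halves of
`B` are offsprings of the corresponding halves of `A`, and whenever `a_j = a_k` the
unordered pairs `(b_j, b_{γ(j)})` and `(b_k, b_{γ(k)})` coincide. -/
def IsCompoundOffspring (m : ℕ) (A B : ℕ → ℕ) : Prop :=
  IsOffspring m A B ∧
  IsOffspring m (fun i => A (m + i)) (fun i => B (m + i)) ∧
  ∀ j k, j < 2*m → k < 2*m → A j = A k →
    min (B j) (B (gammaIdx m j)) = min (B k) (B (gammaIdx m k)) ∧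
    max (B j) (B (gammaIdx m j)) = max (B k) (B (gammaIdx m k))

/-- The number of distinct letters of the word `W` at the positions in `s`. -/
def numLetters (s : Finset ℕ) (W : ℕ → ℕ) : ℕ := (s.image W).card

lemma numLetters_insert (x : ℕ) (s : Finset ℕ) (W : ℕ → ℕ) :
    numLetters (insert x s) W = (insert (W x) (s.image W)).card := by
  simp [numLetters, Finset.image_insert]

lemma numLetters_insert_le (x : ℕ) (s : Finset ℕ) (W : ℕ → ℕ) :
    numLetters (insert x s) W ≤ numLetters s W + 1 := by
  rw [numLetters_insert]; exact Finset.card_insert_le _ _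

lemma numLetters_insert_eq {x : ℕ} {s : Finset ℕ} {W : ℕ → ℕ} (h : W x ∈ s.image W) :
    numLetters (insert x s) W = numLetters s W := by
  rw [numLetters_insert, Finset.insert_eq_self.2 h]; rfl

lemma numLetters_mono {s t : Finset ℕ} (W : ℕ → ℕ) (h : s ⊆ t) :
    numLetters s W ≤ numLetters t W :=
  Finset.card_le_card (Finset.image_subset_image h)

lemma minmax_mem {a b c d : ℕ} (h1 : min a b = min c d) (h2 : max a b = max c d) :
    (b = c ∨ b = d) ∧ (a = c ∨ a = d) := by omega

lemma step_core (SA SB : Finset ℕ) (A B : ℕ → ℕ) (j : ℕ)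
    (key : A j ∈ SA.image A → B j ∈ SB.image B) :
    (numLetters (insert j SB) B : ℤ) - numLetters (insert j SA) A ≤
      (numLetters SB B : ℤ) - numLetters SA A := by
  by_cases h : A j ∈ SA.image A
  · have h1 := numLetters_insert_eq (key h)
    have h2 : numLetters SA A ≤ numLetters (insert j SA) A :=
      numLetters_mono A (Finset.subset_insert _ _)
    omega
  · have h1 : numLetters (insert j SA) A = numLetters SA A + 1 := by
      rw [numLetters_insert, Finset.card_insert_of_notMem h]; rfl
    have h2 := numLetters_insert_le j SB B
    omega

/-- Lemma on compound offspring words: with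
`n_j = #(b_k b₁…b_j) − #(a₁…a_j)` for `1 ≤ j ≤ k−1` and
`n_j = #(b_{2k} b₁…b_j) − #(a₁…a_j)` for `k+1 ≤ j ≤ 2k−1`, the chain
`1 ≥ n₁ ≥ … ≥ n_{k−1} ≥ n_{k+1} − 1 ≥ … ≥ n_{2k−1} − 1` holds. -/
theorem statement4 (k : ℕ) (hk : 2 ≤ k) (A B : ℕ → ℕ)
    (hB : IsCompoundOffspring k A B) (n : ℕ → ℤ)
    (hn1 : ∀ j, 1 ≤ j → j ≤ k - 1 →
      n j = (numLetters (insert (k-1) (Finset.range j)) B : ℤ)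
            - (numLetters (Finset.range j) A : ℤ))
    (hn2 : ∀ j, k + 1 ≤ j → j ≤ 2*k - 1 →
      n j = (numLetters (insert (2*k-1) (Finset.range j)) B : ℤ)
            - (numLetters (Finset.range j) A : ℤ)) :
    n 1 ≤ 1 ∧ (∀ j, 1 ≤ j → j + 1 ≤ k - 1 → n (j+1) ≤ n j) ∧
    n (k+1) - 1 ≤ n (k-1) ∧ (∀ j, k + 1 ≤ j → j + 1 ≤ 2*k - 1 → n (j+1) ≤ n j) := by
  obtain ⟨hoff1, hoff2, hcomp⟩ := hB
  refine ⟨?_, ?_, ?_, ?_⟩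
  · -- n 1 ≤ 1
    rw [hn1 1 le_rfl (by omega)]
    have h1 : numLetters (insert (k-1) (Finset.range 1)) B ≤ numLetters (Finset.range 1) B + 1 :=
      numLetters_insert_le _ _ _
    have h2 : numLetters (Finset.range 1) B = 1 := by
      simp [numLetters, Finset.range_one]
    have h3 : numLetters (Finset.range 1) A = 1 := by
      simp [numLetters, Finset.range_one]
    omega
  · -- first chain
    intro j hj1 hj2
    rw [hn1 j hj1 (by omega), hn1 (j+1) (by omega) hj2]
    have hset : insert (k-1) (Finset.range (j+1)) = insert j (insert (k-1) (Finset.range j)) := by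
      rw [Finset.range_add_one, Finset.insert_comm]
    rw [hset, Finset.range_add_one]
    apply step_core
    intro hA
    obtain ⟨i, hi, hAi⟩ := Finset.mem_image.1 hA
    rw [Finset.mem_range] at hi
    have hjk : j < k := by omega
    obtain ⟨hmin, hmax⟩ := hoff1 j i hjk (by omega) hAi.symm
    have hp : prevIdx k j = j - 1 := by simp [prevIdx]; omega
    have := (minmax_mem hmin hmax).1
    rcases this with h | h
    · refine Finset.mem_image.2 ⟨prevIdx k i, ?_, h.symm⟩
      by_cases hi0 : i = 0
      · simp [prevIdx, hi0]
      · simp only [prevIdx, if_neg hi0, Finset.mem_insert, Finset.mem_range]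
        omega
    · exact Finset.mem_image.2 ⟨i, by simp [Finset.mem_range]; omega, h.symm⟩
  · -- junction
    rw [hn1 (k-1) (by omega) le_rfl, hn2 (k+1) le_rfl (by omega)]
    have hsetB1 : insert (k-1) (Finset.range (k-1)) = Finset.range k := by
      rw [← Finset.range_add_one]; congr 1; omega
    have hsetB2 : insert (2*k-1) (Finset.range (k+1))
        = insert (2*k-1) (insert k (Finset.range k)) := by
      rw [Finset.range_add_one]
    rw [hsetB1, hsetB2, Finset.range_add_one]
    by_cases h : A k ∈ (Finset.range (k-1)).image A
    · -- B k and B (2k-1) both already appear in B (range k)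
      obtain ⟨i, hi, hAi⟩ := Finset.mem_image.1 h
      rw [Finset.mem_range] at hi
      obtain ⟨hmin, hmax⟩ := hcomp k i (by omega) (by omega) hAi.symm
      have hgk : gammaIdx k k = 2*k-1 := by simp [gammaIdx]; omega
      have hgi : gammaIdx k i ∈ Finset.range k := by
        simp only [gammaIdx, Finset.mem_range]
        split_ifs <;> omega
      rw [hgk] at hmin hmax
      obtain ⟨h1, h2⟩ := minmax_mem hmin hmax
      have hBk : B k ∈ (Finset.range k).image B := by
        rcases h2 with h' | h'
        · exact Finset.mem_image.2 ⟨i, Finset.mem_range.2 (by omega), h'.symm⟩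
        · exact Finset.mem_image.2 ⟨gammaIdx k i, hgi, h'.symm⟩
      have hB2k : B (2*k-1) ∈ (Finset.range k).image B := by
        rcases h1 with h' | h'
        · exact Finset.mem_image.2 ⟨i, Finset.mem_range.2 (by omega), h'.symm⟩
        · exact Finset.mem_image.2 ⟨gammaIdx k i, hgi, h'.symm⟩
      have e1 : numLetters (insert k (Finset.range k)) B = numLetters (Finset.range k) B :=
        numLetters_insert_eq hBk
      have e2 : numLetters (insert (2*k-1) (insert k (Finset.range k))) B
          = numLetters (insert k (Finset.range k)) B := by
        apply numLetters_insert_eq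
        exact Finset.image_subset_image (Finset.subset_insert _ _) hB2k
      have e3 : numLetters (Finset.range (k-1)) A ≤ numLetters (insert k (Finset.range (k-1))) A :=
        numLetters_mono A (Finset.subset_insert _ _)
      have e4 : numLetters (Finset.range (k-1)) A ≤ numLetters (Finset.range k) A :=
        numLetters_mono A (Finset.range_subset_range.2 (by omega))
      have e5 : numLetters (Finset.range k) A ≤ numLetters (insert k (Finset.range k)) A :=
        numLetters_mono A (Finset.subset_insert _ _)
      omega
    · -- A k is a new letter
      have hsub : (Finset.range (k-1)).image A ⊂ (insert k (Finset.range k)).image A := by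
        constructor
        · apply Finset.image_subset_image
          intro x hx
          simp only [Finset.mem_insert, Finset.mem_range] at *
          omega
        · intro hcon
          exact h (hcon (Finset.mem_image.2 ⟨k, Finset.mem_insert_self _ _, rfl⟩))
      have e1 : numLetters (Finset.range (k-1)) A + 1 ≤ numLetters (insert k (Finset.range k)) A :=
        Finset.card_lt_card hsub
      have e2 : numLetters (insert (2*k-1) (insert k (Finset.range k))) B
          ≤ numLetters (insert k (Finset.range k)) B + 1 := numLetters_insert_le _ _ _
      have e3 : numLetters (insert k (Finset.range k)) B ≤ numLetters (Finset.range k) B + 1 :=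
        numLetters_insert_le _ _ _
      omega
  · -- second chain
    intro j hj1 hj2
    rw [hn2 j hj1 (by omega), hn2 (j+1) (by omega) hj2]
    have hset : insert (2*k-1) (Finset.range (j+1)) = insert j (insert (2*k-1) (Finset.range j)) := by
      rw [Finset.range_add_one, Finset.insert_comm]
    rw [hset, Finset.range_add_one]
    apply step_core
    intro hA
    obtain ⟨i, hi, hAi⟩ := Finset.mem_image.1 hA
    rw [Finset.mem_range] at hi
    by_cases hik : i < k
    · -- use the compound condition
      obtain ⟨hmin, hmax⟩ := hcomp j i (by omega) (by omega) hAi.symm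
      have := (minmax_mem hmin hmax).2
      rcases this with h' | h'
      · exact Finset.mem_image.2 ⟨i, by simp [Finset.mem_range]; omega, h'.symm⟩
      · refine Finset.mem_image.2 ⟨gammaIdx k i, ?_, h'.symm⟩
        simp only [gammaIdx, Finset.mem_insert, Finset.mem_range]
        split_ifs <;> omega
    · -- use the second-half offspring condition
      have hj : k + (j - k) = j := by omega
      have hi' : k + (i - k) = i := by omega
      obtain ⟨hmin, hmax⟩ := hoff2 (j-k) (i-k) (by omega) (by omega)
        (by simp only [hj, hi']; exact hAi.symm)
      simp only [hj, hi'] at hmin hmax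
      have := (minmax_mem hmin hmax).1
      rcases this with h' | h'
      · refine Finset.mem_image.2 ⟨k + prevIdx k (i-k), ?_, h'.symm⟩
        simp only [prevIdx, Finset.mem_insert, Finset.mem_range]
        split_ifs <;> omega
      · exact Finset.mem_image.2 ⟨i, by simp [Finset.mem_range]; omega, h'.symm⟩
end

section
/- If D is an offspring word of C = c₁…c_k with k ≥ 2, then the number of distinct letters of D is at most 1 plus the number of distinct letters of c₁…c_{k−1}. -/
/-- If `D` is an offspring word of `C = c₁…c_k` with `k ≥ 2`, then the number of
distinct letters of `D` is at most `1` plus the number of distinct letters of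
`c₁…c_{k−1}`. -/
theorem statement5 (k : ℕ) (hk : 2 ≤ k) (C D : ℕ → ℕ) (hD : IsOffspring k C D) :
    numLetters (Finset.range k) D ≤ 1 + numLetters (Finset.range (k-1)) C := by
  classical
  set T : Finset ℕ :=
    (Finset.range k).filter (fun j => D j ≠ D (k-1) ∧ ∀ i < j, D j ≠ D i) with hT
  have hTmem : ∀ j, j ∈ T ↔ j < k ∧ D j ≠ D (k-1) ∧ ∀ i < j, D j ≠ D i := by
    intro j
    simp [hT, Finset.mem_filter, Finset.mem_range]
  have hTsub : T ⊆ Finset.range (k-1) := by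
    intro j hj
    rw [hTmem] at hj
    obtain ⟨hjk, hne, -⟩ := hj
    have : j ≠ k - 1 := fun h => hne (by rw [h])
    simp [Finset.mem_range]; omega
  have hcover : (Finset.range k).image D ⊆ insert (D (k-1)) (T.image D) := by
    intro v hv
    simp only [Finset.mem_image, Finset.mem_range] at hv
    obtain ⟨j, hj, rfl⟩ := hv
    by_cases h0 : D j = D (k-1)
    · simp [h0]
    · have hex : ∃ i, D i = D j := ⟨j, rfl⟩
      have hj0spec : D (Nat.find hex) = D j := Nat.find_spec hex
      have hj0le : Nat.find hex ≤ j := Nat.find_le rfl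
      refine Finset.mem_insert_of_mem (Finset.mem_image.2 ⟨Nat.find hex, ?_, hj0spec⟩)
      rw [hTmem]
      refine ⟨by omega, by rw [hj0spec]; exact h0, ?_⟩
      intro i hi hcontra
      exact Nat.find_min hex hi (hcontra.symm.trans hj0spec)
  have key : ∀ j1 j2, j1 ∈ T → j2 ∈ T → j1 < j2 → C j1 ≠ C j2 := by
    intro j1 j2 h1 h2 hlt hC
    rw [hTmem] at h1 h2
    obtain ⟨hk1, hne1, hmin1⟩ := h1
    obtain ⟨hk2, hne2, hmin2⟩ := h2
    obtain ⟨hmin, hmax⟩ := hD j1 j2 hk1 hk2 hC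
    have hmem : D j2 = D (prevIdx k j1) ∨ D j2 = D j1 := by omega
    rcases hmem with h | h
    · unfold prevIdx at h
      by_cases hz : j1 = 0
      · rw [if_pos hz] at h
        exact hne2 h
      · rw [if_neg hz] at h
        exact hmin2 (j1 - 1) (by omega) h
    · exact hmin2 j1 hlt h
  have hinj : Set.InjOn C T := by
    intro j1 h1 j2 h2 hC
    by_contra hne
    rcases lt_or_gt_of_ne hne with h | h
    · exact key j1 j2 h1 h2 h hC
    · exact key j2 j1 h2 h1 h hC.symm
  calc numLetters (Finset.range k) D
      ≤ (insert (D (k-1)) (T.image D)).card := Finset.card_le_card hcover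
    _ ≤ (T.image D).card + 1 := Finset.card_insert_le _ _
    _ ≤ T.card + 1 := by have := Finset.card_image_le (s := T) (f := D); omega
    _ = (T.image C).card + 1 := by rw [Finset.card_image_of_injOn hinj]
    _ ≤ 1 + numLetters (Finset.range (k-1)) C := by
        rw [Nat.add_comm]
        gcongr
        exact Finset.card_le_card (Finset.image_subset_image hTsub)
end

section
/- If A is an almost pair matched word of length 2m with m ≥ 2, and B is an offspring of A, then B has at most m+1 distinct letters. -/
/-- A word of length `n` is almost pair matched: there is an involution `π` of the
positions with exactly two fixed points under which letters match. -/
def IsAlmostPairMatched (n : ℕ) (A : ℕ → ℕ) : Prop :=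
  ∃ π : ℕ → ℕ, (∀ j < n, π j < n) ∧ (∀ j < n, π (π j) = j) ∧
    ((Finset.range n).filter fun j => π j = j).card = 2 ∧
    ∀ j < n, A (π j) = A j

def ordIdx (n f j : ℕ) : ℕ := if f ≤ j then j - f else j + (n - f)

lemma ordIdx_inj (n f : ℕ) (hf : f < n) (j k : ℕ) (hj : j < n) (hk : k < n)
    (h : ordIdx n f j = ordIdx n f k) : j = k := by
  unfold ordIdx at h; split_ifs at h <;> omega

lemma ordIdx_prev (n f : ℕ) (hf : f < n) (k : ℕ) (hk : k < n) (hkf : k ≠ f) :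
    ordIdx n f (prevIdx n k) < ordIdx n f k := by
  unfold ordIdx prevIdx; split_ifs <;> omega

/-- An offspring of an almost pair matched word of length `2m` (`m ≥ 2`) has at
most `m+1` distinct letters. -/
theorem statement6 (m : ℕ) (hm : 2 ≤ m) (A B : ℕ → ℕ)
    (hA : IsAlmostPairMatched (2*m) A) (hB : IsOffspring (2*m) A B) :
    numLetters (Finset.range (2*m)) B ≤ m + 1 := by
  classical
  obtain ⟨π, hπlt, hπinv, hcard, hπA⟩ := hA
  set n := 2*m with hn
  -- a fixed point f
  have hFixne : ((Finset.range n).filter fun j => π j = j).Nonempty :=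
    Finset.card_pos.mp (by rw [hcard]; norm_num)
  obtain ⟨f, hfmem⟩ := hFixne
  obtain ⟨hfr, hff⟩ := Finset.mem_filter.mp hfmem
  have hfn : f < n := Finset.mem_range.mp hfr
  set Fix : Finset ℕ := (Finset.range n).filter fun j => π j = j with hFixdef
  set Good : Finset ℕ := (Finset.range n).filter
      (fun j => π j = j ∨ ordIdx n f j < ordIdx n f (π j)) with hGooddef
  set NonFix : Finset ℕ := (Finset.range n).filter (fun j => ¬ π j = j) with hNFdef
  set Up : Finset ℕ := NonFix.filter (fun j => ordIdx n f j < ordIdx n f (π j)) with hUpdef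
  set Down : Finset ℕ := NonFix.filter (fun j => ¬ ordIdx n f j < ordIdx n f (π j))
    with hDowndef
  -- cardinalities
  have h1 : Fix.card + NonFix.card = n :=
    Finset.card_filter_add_card_filter_not (s := Finset.range n)
      (p := fun j => π j = j) |>.trans (Finset.card_range n)
  have h2 : Up.card + Down.card = NonFix.card :=
    Finset.card_filter_add_card_filter_not (s := NonFix)
      (p := fun j => ordIdx n f j < ordIdx n f (π j))
  have hUD : Up.card = Down.card := by
    apply Finset.card_bij (fun j _ => π j)
    · intro a ha
      obtain ⟨hanf, haup⟩ := Finset.mem_filter.mp ha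
      obtain ⟨har, hane⟩ := Finset.mem_filter.mp hanf
      have han : a < n := Finset.mem_range.mp har
      have hπan : π a < n := hπlt a han
      have hππ : π (π a) = a := hπinv a han
      refine Finset.mem_filter.mpr ⟨Finset.mem_filter.mpr
        ⟨Finset.mem_range.mpr hπan, ?_⟩, ?_⟩
      · rw [hππ]; exact fun h => hane h.symm
      · rw [hππ]; omega
    · intro a ha b hb hab
      obtain ⟨hanf, _⟩ := Finset.mem_filter.mp ha
      obtain ⟨har, _⟩ := Finset.mem_filter.mp hanf
      obtain ⟨hbnf, _⟩ := Finset.mem_filter.mp hb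
      obtain ⟨hbr, _⟩ := Finset.mem_filter.mp hbnf
      have := hπinv a (Finset.mem_range.mp har)
      have := hπinv b (Finset.mem_range.mp hbr)
      rw [← hπinv a (Finset.mem_range.mp har), ← hπinv b (Finset.mem_range.mp hbr), hab]
    · intro b hb
      obtain ⟨hbnf, hbdown⟩ := Finset.mem_filter.mp hb
      obtain ⟨hbr, hbne⟩ := Finset.mem_filter.mp hbnf
      have hbn : b < n := Finset.mem_range.mp hbr
      have hπbn : π b < n := hπlt b hbn
      have hππ : π (π b) = b := hπinv b hbn
      have hne2 : ordIdx n f (π b) ≠ ordIdx n f b := fun h =>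
        hbne (ordIdx_inj n f hfn (π b) b hπbn hbn h)
      refine ⟨π b, Finset.mem_filter.mpr ⟨Finset.mem_filter.mpr
        ⟨Finset.mem_range.mpr hπbn, ?_⟩, ?_⟩, hππ⟩
      · rw [hππ]; exact fun h => hbne h.symm
      · rw [hππ]; omega
  have hUpcard : Up.card = m - 1 := by omega
  -- Good ⊆ Fix ∪ Up
  have hGsub : Good ⊆ Fix ∪ Up := by
    intro j hj
    obtain ⟨hjr, hjg⟩ := Finset.mem_filter.mp hj
    by_cases hfix : π j = j
    · exact Finset.mem_union_left _ (Finset.mem_filter.mpr ⟨hjr, hfix⟩)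
    · rcases hjg with h | h
      · exact absurd h hfix
      · exact Finset.mem_union_right _ (Finset.mem_filter.mpr
          ⟨Finset.mem_filter.mpr ⟨hjr, hfix⟩, h⟩)
  have hGcard : Good.card ≤ m + 1 := by
    calc Good.card ≤ (Fix ∪ Up).card := Finset.card_le_card hGsub
      _ ≤ Fix.card + Up.card := Finset.card_union_le _ _
      _ ≤ m + 1 := by omega
  -- every value of B appears at a Good position
  have key : ∀ o j, j < n → ordIdx n f j = o → B j ∈ Good.image B := by
    intro o
    induction o using Nat.strong_induction_on with
    | _ o ih =>
      intro j hj hord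
      by_cases hg : π j = j ∨ ordIdx n f j < ordIdx n f (π j)
      · exact Finset.mem_image_of_mem B
          (Finset.mem_filter.mpr ⟨Finset.mem_range.mpr hj, hg⟩)
      · push_neg at hg
        obtain ⟨hne, hle⟩ := hg
        have hk : π j < n := hπlt j hj
        have hne2 : ordIdx n f (π j) ≠ ordIdx n f j := fun h =>
          hne (ordIdx_inj n f hfn (π j) j hk hj h)
        have hklt : ordIdx n f (π j) < ordIdx n f j := lt_of_le_of_ne hle hne2
        have hkf : π j ≠ f := by
          intro h
          have h2 := hπinv j hj
          rw [h, hff] at h2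
          exact hne (h ▸ h2.symm ▸ rfl : π j = j)
        have hprevn : prevIdx n (π j) < n := by unfold prevIdx; split <;> omega
        have hordprev := ordIdx_prev n f hfn (π j) hk hkf
        have hAjk : A j = A (π j) := (hπA j hj).symm
        obtain ⟨hmin, hmax⟩ := hB j (π j) hj hk hAjk
        have hBmem : B j = B (prevIdx n (π j)) ∨ B j = B (π j) := by omega
        rcases hBmem with h | h
        · rw [h]; exact ih _ (by omega) _ hprevn rfl
        · rw [h]; exact ih _ (by omega) _ hk rfl
  have hsub : (Finset.range n).image B ⊆ Good.image B := by
    intro v hv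
    obtain ⟨j, hj, rfl⟩ := Finset.mem_image.mp hv
    exact key _ j (Finset.mem_range.mp hj) rfl
  calc numLetters (Finset.range (2*m)) B = ((Finset.range n).image B).card := rfl
    _ ≤ (Good.image B).card := Finset.card_le_card hsub
    _ ≤ Good.card := Finset.card_image_le
    _ ≤ m + 1 := hGcard
end

section
/- If A is an almost pair matched word of length 2m with m ≥ 2, and B is a compound offspring of A, then B has at most m+2 distinct letters. -/
/-- Traversal time: the half not containing `f` is traversed first (in natural
cyclic order), then the half containing `f`, starting at `f`. -/
def tau (m f j : ℕ) : ℕ :=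
  if j < m then
    (if f < m then (if f ≤ j then m + j - f else 2*m + j - f) else j)
  else
    (if f < m then j - m else (if f ≤ j then m + j - f else 2*m + j - f))

lemma tau_inj (m f : ℕ) (hm : 1 ≤ m) (hf : f < 2*m) :
    ∀ j < 2*m, ∀ k < 2*m, tau m f j = tau m f k → j = k := by
  intro j hj k hk h
  simp only [tau] at h
  split_ifs at h <;> omega

lemma tau_f (m f : ℕ) (hm : 1 ≤ m) (hf : f < 2*m) : tau m f f = m := by
  simp only [tau]; split_ifs <;> omega

lemma tau_p0 (m f : ℕ) (hm : 1 ≤ m) (hf : f < 2*m) :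
    tau m f (if f < m then m else 0) = 0 := by
  simp only [tau]; split_ifs <;> omega

lemma tau_gamma_lt (m f : ℕ) (hm : 1 ≤ m) (hf : f < 2*m) :
    ∀ k < 2*m, tau m f k ≠ 0 → tau m f k ≠ m → tau m f (gammaIdx m k) < tau m f k := by
  intro k hk h0 hmm
  simp only [tau, gammaIdx] at *
  split_ifs at * <;> omega

lemma gamma_lt (m : ℕ) (hm : 1 ≤ m) (k : ℕ) (hk : k < 2*m) : gammaIdx m k < 2*m := by
  simp only [gammaIdx]; split_ifs <;> omega

/-- The number of distinct values of `W` on `range n` equals the number of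
"record" positions with respect to any injective time function `τ`. -/
lemma recordCount (n : ℕ) (τ W : ℕ → ℕ)
    (hinj : ∀ j ∈ Finset.range n, ∀ k ∈ Finset.range n, τ j = τ k → j = k) :
    ((Finset.range n).image W).card =
      ((Finset.range n).filter fun j => ∀ k ∈ Finset.range n, τ k < τ j → W k ≠ W j).card := by
  set s := Finset.range n
  set F := s.filter fun j => ∀ k ∈ s, τ k < τ j → W k ≠ W j with hF
  have himg : s.image W = F.image W := by
    apply Finset.Subset.antisymm
    · intro b hb
      obtain ⟨j, hj, rfl⟩ := Finset.mem_image.mp hb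
      have hT : (s.filter fun k => W k = W j).Nonempty :=
        ⟨j, Finset.mem_filter.mpr ⟨hj, rfl⟩⟩
      obtain ⟨k0, hk0, hk0min⟩ := Finset.exists_min_image _ τ hT
      rw [Finset.mem_filter] at hk0
      refine Finset.mem_image.mpr ⟨k0, Finset.mem_filter.mpr ⟨hk0.1, ?_⟩, hk0.2⟩
      intro k hk hlt hWk
      have := hk0min k (Finset.mem_filter.mpr ⟨hk, hWk.trans hk0.2⟩)
      omega
    · exact Finset.image_subset_image (Finset.filter_subset _ _)
  rw [himg]
  apply Finset.card_image_of_injOn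
  intro j hj k hk hW
  have hj' := Finset.mem_filter.mp (Finset.mem_coe.mp hj)
  have hk' := Finset.mem_filter.mp (Finset.mem_coe.mp hk)
  by_contra hne
  have hτ : τ j ≠ τ k := fun h => hne (hinj j hj'.1 k hk'.1 h)
  rcases Nat.lt_or_ge (τ j) (τ k) with h | h
  · exact hk'.2 j hj'.1 h hW
  · exact hj'.2 k hk'.1 (by omega) hW.symm

/-- A compound offspring of an almost pair matched word of length `2m` (`m ≥ 2`)
has at most `m+2` distinct letters. -/
theorem statement7 (m : ℕ) (hm : 2 ≤ m) (A B : ℕ → ℕ)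
    (hA : IsAlmostPairMatched (2*m) A) (hB : IsCompoundOffspring m A B) :
    numLetters (Finset.range (2*m)) B ≤ m + 2 := by
  obtain ⟨π, hπlt, hπinv, hπfix, hπA⟩ := hA
  obtain ⟨-, -, hcross⟩ := hB
  have hm1 : 1 ≤ m := by omega
  -- pick a fixed point f of π
  have hfixne : ((Finset.range (2*m)).filter fun j => π j = j).Nonempty := by
    rw [← Finset.card_pos, hπfix]; omega
  obtain ⟨f, hfmem⟩ := hfixne
  have hfs := Finset.mem_filter.mp hfmem
  have hflt : f < 2*m := Finset.mem_range.mp hfs.1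
  have hπf : π f = f := hfs.2
  set s := Finset.range (2*m) with hs
  set τ := tau m f with hτdef
  set p0 := if f < m then m else 0 with hp0def
  have hp0lt : p0 < 2*m := by rw [hp0def]; split_ifs <;> omega
  have hτp0 : τ p0 = 0 := tau_p0 m f hm1 hflt
  have hτf : τ f = m := tau_f m f hm1 hflt
  have hinj := tau_inj m f hm1 hflt
  have hinj' : ∀ j ∈ s, ∀ k ∈ s, τ j = τ k → j = k := fun j hj k hk h =>
    hinj j (Finset.mem_range.mp hj) k (Finset.mem_range.mp hk) h
  set R := s.filter (fun j => ∀ k ∈ s, τ k < τ j → B k ≠ B j) with hRdef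
  set FA := s.filter (fun j => ∀ k ∈ s, τ k < τ j → A k ≠ A j) with hFAdef
  have hRcard : (s.image B).card = R.card := recordCount (2*m) τ B hinj'
  have hFAcard : (s.image A).card = FA.card := recordCount (2*m) τ A hinj'
  -- key structural lemma about non-fresh records
  have key : ∀ j ∈ R, j ∉ FA →
      B j = B (gammaIdx m p0) ∨ (j < 2*m ∧ j ≠ f ∧ A j = A f ∧ B j = B (gammaIdx m f)) := by
    intro j hjR hjFA
    have hj := Finset.mem_filter.mp hjR
    have hjlt : j < 2*m := Finset.mem_range.mp hj.1
    have hex : ∃ k, k ∈ s ∧ τ k < τ j ∧ A k = A j := by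
      by_contra hcon
      push_neg at hcon
      exact hjFA (Finset.mem_filter.mpr ⟨hj.1, fun k hk hlt => hcon k hk hlt⟩)
    obtain ⟨k, hks, hkτ, hAkj⟩ := hex
    have hklt : k < 2*m := Finset.mem_range.mp hks
    obtain ⟨hmin, hmax⟩ := hcross j k hjlt hklt hAkj.symm
    have hBjk : B k ≠ B j := hj.2 k hks hkτ
    have hBj : B j = B (gammaIdx m k) := by omega
    by_cases hk0 : τ k = 0
    · left
      have hkp : k = p0 := hinj k hklt p0 hp0lt (by show τ k = τ p0; rw [hk0, hτp0])
      rw [← hkp]; exact hBj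
    · by_cases hkm : τ k = m
      · right
        have hkf : k = f := hinj k hklt f hflt (by show τ k = τ f; rw [hkm, hτf])
        have hjf : j ≠ f := by
          intro h; rw [h, hτf] at hkτ; omega
        exact ⟨hjlt, hjf, by rw [← hkf]; exact hAkj.symm, by rw [← hkf]; exact hBj⟩
      · exfalso
        have hγ : τ (gammaIdx m k) < τ k := tau_gamma_lt m f hm1 hflt k hklt hk0 hkm
        have hγs : gammaIdx m k ∈ s := Finset.mem_range.mpr (gamma_lt m hm1 k hklt)
        exact hj.2 (gammaIdx m k) hγs (by omega) hBj.symm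
  -- B is injective on records
  have hBinjR : ∀ j ∈ R, ∀ k ∈ R, B j = B k → j = k := by
    intro j hj k hk hW
    have hj' := Finset.mem_filter.mp hj
    have hk' := Finset.mem_filter.mp hk
    by_contra hne
    have hτne : τ j ≠ τ k := fun h => hne (hinj' j hj'.1 k hk'.1 h)
    rcases Nat.lt_or_ge (τ j) (τ k) with h | h
    · exact hk'.2 j hj'.1 h hW
    · exact hj'.2 k hk'.1 (by omega) hW.symm
  -- orbit counting: representatives
  set reps := s.filter (fun j => j ≤ π j) with hrepsdef
  have hrepcard : reps.card = m + 1 := by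
    have c1 : reps.card + (s.filter fun j => ¬ j ≤ π j).card = 2*m := by
      rw [hrepsdef, Finset.card_filter_add_card_filter_not, Finset.card_range]
    have hnegeq : (s.filter fun j => ¬ j ≤ π j) = s.filter fun j => π j < j :=
      Finset.filter_congr (fun x _ => by omega)
    have hsplit : reps = (s.filter fun j => π j = j) ∪ (s.filter fun j => j < π j) := by
      rw [← Finset.filter_or]
      exact Finset.filter_congr (fun x _ => by omega)
    have hdisj : Disjoint (s.filter fun j => π j = j) (s.filter fun j => j < π j) := by
      rw [Finset.disjoint_left]
      intro a ha hb
      have h1 := (Finset.mem_filter.mp ha).2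
      have h2 := (Finset.mem_filter.mp hb).2
      omega
    have hrc : reps.card = 2 + (s.filter fun j => j < π j).card := by
      rw [hsplit, Finset.card_union_of_disjoint hdisj, hπfix]
    have hlohi : (s.filter fun j => j < π j).card = (s.filter fun j => π j < j).card := by
      apply Finset.card_bij (fun j _ => π j)
      · intro a ha
        have ha' := Finset.mem_filter.mp ha
        have halt := Finset.mem_range.mp ha'.1
        refine Finset.mem_filter.mpr ⟨Finset.mem_range.mpr (hπlt a halt), ?_⟩
        rw [hπinv a halt]; exact ha'.2
      · intro a ha b hb h
        have halt := Finset.mem_range.mp (Finset.mem_filter.mp ha).1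
        have hblt := Finset.mem_range.mp (Finset.mem_filter.mp hb).1
        rw [← hπinv a halt, h, hπinv b hblt]
      · intro b hb
        have hb' := Finset.mem_filter.mp hb
        have hblt := Finset.mem_range.mp hb'.1
        refine ⟨π b, Finset.mem_filter.mpr ⟨Finset.mem_range.mpr (hπlt b hblt), ?_⟩, hπinv b hblt⟩
        rw [hπinv b hblt]; exact hb'.2
    rw [hnegeq] at c1
    omega
  have himA : s.image A ⊆ reps.image A := by
    intro b hb
    obtain ⟨j, hj, rfl⟩ := Finset.mem_image.mp hb
    have hjlt := Finset.mem_range.mp hj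
    by_cases h : j ≤ π j
    · exact Finset.mem_image.mpr ⟨j, Finset.mem_filter.mpr ⟨hj, h⟩, rfl⟩
    · refine Finset.mem_image.mpr ⟨π j, Finset.mem_filter.mpr
        ⟨Finset.mem_range.mpr (hπlt j hjlt), ?_⟩, hπA j hjlt⟩
      rw [hπinv j hjlt]; omega
  have hL1 : (s.image A).card ≤ m + 1 := by
    calc (s.image A).card ≤ (reps.image A).card := Finset.card_le_card himA
      _ ≤ reps.card := Finset.card_image_le
      _ = m + 1 := hrepcard
  have hmain : R.card ≤ (R \ FA).card + FA.card := Finset.card_le_card_sdiff_add_card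
  show (s.image B).card ≤ m + 2
  by_cases hc : ∃ i, i < 2*m ∧ i ≠ f ∧ A i = A f
  · -- the letter of f repeats: at most m letters, at most 2 extra records
    obtain ⟨i, hilt, hif, hiA⟩ := hc
    set r := if i ≤ π i then i else π i with hrdef
    have hrreps : r ∈ reps := by
      rw [hrdef]
      split_ifs with h
      · exact Finset.mem_filter.mpr ⟨Finset.mem_range.mpr hilt, h⟩
      · refine Finset.mem_filter.mpr ⟨Finset.mem_range.mpr (hπlt i hilt), ?_⟩
        rw [hπinv i hilt]; omega
    have hrA : A r = A f := by
      rw [hrdef]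
      split_ifs with h
      · exact hiA
      · rw [hπA i hilt]; exact hiA
    have hrf : r ≠ f := by
      rw [hrdef]
      split_ifs with h
      · exact hif
      · intro heq
        apply hif
        rw [← hπinv i hilt, heq, hπf]
    have hfreps : f ∈ reps := Finset.mem_filter.mpr ⟨hfs.1, by rw [hπf]⟩
    have himA2 : s.image A ⊆ (reps.erase r).image A := by
      intro b hb
      obtain ⟨x, hx, rfl⟩ := Finset.mem_image.mp (himA hb)
      by_cases hxr : x = r
      · refine Finset.mem_image.mpr ⟨f, Finset.mem_erase.mpr ⟨fun h => hrf h.symm, hfreps⟩, ?_⟩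
        rw [hxr, hrA]
      · exact Finset.mem_image.mpr ⟨x, Finset.mem_erase.mpr ⟨hxr, hx⟩, rfl⟩
    have hLm : (s.image A).card ≤ m := by
      calc (s.image A).card ≤ ((reps.erase r).image A).card := Finset.card_le_card himA2
        _ ≤ (reps.erase r).card := Finset.card_image_le
        _ = m := by rw [Finset.card_erase_of_mem hrreps, hrepcard]; omega
    have h2 : (R \ FA).card ≤ 2 := by
      have hle : (R \ FA).card ≤ ({B (gammaIdx m p0), B (gammaIdx m f)} : Finset ℕ).card := by
        apply Finset.card_le_card_of_injOn B
        · intro j hj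
          obtain ⟨hjR, hjFA⟩ := Finset.mem_sdiff.mp hj
          rcases key j hjR hjFA with h | h
          · simp [h]
          · simp [h.2.2.2]
        · intro j hj k hk h
          exact hBinjR j (Finset.mem_sdiff.mp (Finset.mem_coe.mp hj)).1
            k (Finset.mem_sdiff.mp (Finset.mem_coe.mp hk)).1 h
      calc (R \ FA).card ≤ _ := hle
        _ ≤ ({B (gammaIdx m f)} : Finset ℕ).card + 1 := Finset.card_insert_le _ _
        _ ≤ 2 := by simp
    omega
  · -- the letter of f is unique: at most one extra record
    push_neg at hc
    have h1 : (R \ FA).card ≤ 1 := by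
      have hle : (R \ FA).card ≤ ({B (gammaIdx m p0)} : Finset ℕ).card := by
        apply Finset.card_le_card_of_injOn B
        · intro j hj
          obtain ⟨hjR, hjFA⟩ := Finset.mem_sdiff.mp hj
          rcases key j hjR hjFA with h | h
          · simp [h]
          · exact absurd h.2.2.1 (hc j h.1 h.2.1)
        · intro j hj k hk h
          exact hBinjR j (Finset.mem_sdiff.mp (Finset.mem_coe.mp hj)).1
            k (Finset.mem_sdiff.mp (Finset.mem_coe.mp hk)).1 h
      simpa using hle
    omega
end

section
/- If B = b₁…b_{2m} is an offspring of a Catalan word A = a₁…a_{2m} with #B = m+1, then whenever a_j = a_k for j < k, it holds that b_{j−1} = b_k and b_j = b_{k−1} (with b₀ := b_{2m}). -/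
/-- A word of length `n` is pair matched: there is a fixed-point-free involution
`π` of the positions under which letters match. -/
def IsPairMatched (n : ℕ) (A : ℕ → ℕ) : Prop :=
  ∃ π : ℕ → ℕ, (∀ j < n, π j < n) ∧ (∀ j < n, π (π j) = j) ∧
    (∀ j < n, π j ≠ j) ∧ ∀ j < n, A (π j) = A j

/-- A list reduces to the empty list by successively deleting adjacent double letters. -/
inductive CatalanReduces : List ℕ → Prop
  | nil : CatalanReduces []
  | step (l1 l2 : List ℕ) (x : ℕ) :
      CatalanReduces (l1 ++ l2) → CatalanReduces (l1 ++ x :: x :: l2)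

/-- A Catalan word of length `n`: pair matched and reducible to the empty word
by successive deletions of adjacent double letters. -/
def IsCatalanWord (n : ℕ) (A : ℕ → ℕ) : Prop :=
  IsPairMatched n A ∧ CatalanReduces ((List.range n).map A)

lemma pair_eq_cases {a b c d : ℕ} (h1 : min a b = min c d) (h2 : max a b = max c d) :
    (a = c ∧ b = d) ∨ (a = d ∧ b = c) := by omega

lemma even_card_of_invol (s : Finset ℕ) (f : ℕ → ℕ) (h1 : ∀ x ∈ s, f x ∈ s)
    (h2 : ∀ x ∈ s, f (f x) = x) (h3 : ∀ x ∈ s, f x ≠ x) : Even s.card := by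
  classical
  induction s using Finset.strongInduction with
  | _ s ih =>
    rcases s.eq_empty_or_nonempty with rfl | ⟨a, ha⟩
    · simp
    · have hfa : f a ∈ s := h1 a ha
      have hne : f a ≠ a := h3 a ha
      set s' := (s.erase a).erase (f a) with hs'
      have hsub : s' ⊆ s := fun x hx => Finset.mem_of_mem_erase (Finset.mem_of_mem_erase hx)
      have hmem : ∀ x, x ∈ s' ↔ x ∈ s ∧ x ≠ a ∧ x ≠ f a := by
        intro x
        simp [hs', Finset.mem_erase]
        tauto
      have hss : s' ⊂ s := Finset.ssubset_of_ssubset_of_subset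
        (Finset.erase_ssubset (Finset.mem_erase.2 ⟨hne, hfa⟩)) (Finset.erase_subset _ _)
      have hcard : s.card = s'.card + 2 := by
        have h2' : s'.card + 1 = (s.erase a).card := by
          rw [hs', Finset.card_erase_of_mem (Finset.mem_erase.2 ⟨hne, hfa⟩)]
          have h0 : 0 < (s.erase a).card :=
            Finset.card_pos.2 ⟨f a, Finset.mem_erase.2 ⟨hne, hfa⟩⟩
          omega
        have h1' : (s.erase a).card + 1 = s.card := by
          rw [Finset.card_erase_of_mem ha]
          have h0 : 0 < s.card := Finset.card_pos.2 ⟨a, ha⟩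
          omega
        omega
      have he : Even s'.card := by
        refine ih s' hss (fun x hx => ?_) (fun x hx => h2 x (hsub hx)) (fun x hx => h3 x (hsub hx))
        rw [hmem] at hx ⊢
        refine ⟨h1 x hx.1, ?_, ?_⟩
        · intro h; apply hx.2.2; rw [← h2 x hx.1, h]
        · intro h
          have := h2 x hx.1
          rw [h, h2 a ha] at this
          exact hx.2.1 this.symm
      rw [hcard]
      exact he.add even_two

def gA (tau par : ℕ → ℕ) (v0 : ℕ) : ℕ → ℕ → ℕ
  | 0, v => if v = v0 then 1 else 0
  | (f+1), v => if v = v0 then 1 else if tau v = 0 then 0 else gA tau par v0 f (par v)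

lemma gA_v0 (tau par : ℕ → ℕ) (v0 : ℕ) (f : ℕ) : gA tau par v0 f v0 = 1 := by
  cases f <;> simp [gA]

section
variable (s : Finset ℕ) (tau par : ℕ → ℕ) (v0 : ℕ)
variable (hpar : ∀ v ∈ s, 1 ≤ tau v → par v ∈ s ∧ tau (par v) < tau v)

include hpar in
lemma gA_stable : ∀ fuel v, v ∈ s → tau v ≤ fuel →
    gA tau par v0 fuel v = gA tau par v0 (tau v) v := by
  intro fuel
  induction fuel using Nat.strong_induction_on with
  | _ fuel ih =>
    intro v hv hle
    match fuel with
    | 0 => have : tau v = 0 := by omega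
           rw [this]
    | (f+1) =>
      by_cases hv0 : v = v0
      · subst hv0; rw [gA_v0, gA_v0]
      · by_cases ht0 : tau v = 0
        · rw [ht0]; simp [gA, hv0, ht0]
        · obtain ⟨hps, hplt⟩ := hpar v hv (by omega)
          obtain ⟨t, ht⟩ : ∃ t, tau v = t + 1 := ⟨tau v - 1, by omega⟩
          rw [ht]
          show gA tau par v0 (f+1) v = gA tau par v0 (t+1) v
          simp only [gA, if_neg hv0, if_neg ht0]
          rw [ih f (by omega) (par v) hps (by omega),
              ih t (by omega) (par v) hps (by omega)]

include hpar in
lemma gA_zero_aux : ∀ n v, tau v = n → v ∈ s → tau v < tau v0 → gA tau par v0 (tau v) v = 0 := by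
  intro n
  induction n using Nat.strong_induction_on with
  | _ n ih =>
    intro v hn hv hlt
    have hv0 : v ≠ v0 := fun h => by subst h; omega
    match n, hn with
    | 0, hn => rw [hn]; simp [gA, hv0]
    | (t+1), hn =>
      obtain ⟨hps, hplt⟩ := hpar v hv (by omega)
      rw [hn]
      simp only [gA, if_neg hv0]
      rw [if_neg (by omega : ¬ tau v = 0)]
      rw [gA_stable s tau par v0 hpar t (par v) hps (by omega)]
      exact ih (tau (par v)) (by omega) (par v) rfl hps (by omega)

include hpar in
lemma gA_zero : ∀ v ∈ s, tau v < tau v0 → gA tau par v0 (tau v) v = 0 :=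
  fun v hv hlt => gA_zero_aux s tau par v0 hpar (tau v) v rfl hv hlt

include hpar in
lemma gA_step : ∀ v ∈ s, v ≠ v0 → 1 ≤ tau v →
    gA tau par v0 (tau v) v = gA tau par v0 (tau (par v)) (par v) := by
  intro v hv hv0 h1
  obtain ⟨hps, hplt⟩ := hpar v hv h1
  obtain ⟨t, ht⟩ : ∃ t, tau v = t + 1 := ⟨tau v - 1, by omega⟩
  rw [ht]
  simp only [gA, if_neg hv0, if_neg (by omega : ¬ tau v = 0)]
  rw [gA_stable s tau par v0 hpar t (par v) hps (by omega)]
end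

theorem statement9' (m : ℕ) (hm : 1 ≤ m) (A B : ℕ → ℕ)
    (hA : IsPairMatched (2*m) A) (hB : IsOffspring (2*m) A B)
    (hcard : numLetters (Finset.range (2*m)) B = m + 1) :
    ∀ j k, j < k → k < 2*m → A j = A k →
      B (prevIdx (2*m) j) = B k ∧ B j = B (prevIdx (2*m) k) := by
  classical
  intro j k hjk hkn hAjk
  obtain ⟨π, hπlt, hπinv, hπne, hπA⟩ := hA
  set n := 2*m with hn
  have hn2 : 2 ≤ n := by omega
  -- the closed walk u
  set u : ℕ → ℕ := fun t => if t = 0 then B (n - 1) else B (t - 1) with hu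
  have hun0 : u n = u 0 := by
    have h0 : ¬ n = 0 := by omega
    simp [hu, h0]
  have huB : ∀ t, t < n → u t = B (prevIdx n t) ∧ u (t+1) = B t := by
    intro t ht
    constructor
    · by_cases h : t = 0 <;> simp [hu, prevIdx, h]
    · simp [hu]
  -- edges of the walk
  set eu : ℕ → ℕ × ℕ := fun t => (min (u t) (u (t+1)), max (u t) (u (t+1))) with heu
  have ho : ∀ t t', t < n → t' < n → A t = A t' → eu t = eu t' := by
    intro t t' ht ht' hAe
    obtain ⟨h1, h2⟩ := hB t t' ht ht' hAe
    obtain ⟨e11, e12⟩ := huB t ht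
    obtain ⟨e21, e22⟩ := huB t' ht'
    simp only [heu, Prod.mk.injEq]
    rw [e11, e12, e21, e22]
    exact ⟨h1, h2⟩
  -- the vertex set
  set s : Finset ℕ := (Finset.range n).image B with hs
  have hscard : s.card = m + 1 := hcard
  have hus : ∀ t, t ≤ n → u t ∈ s := by
    intro t ht
    rw [hs]
    by_cases h : t = 0
    · subst h
      exact Finset.mem_image.2 ⟨n - 1, Finset.mem_range.2 (by omega), by simp [hu]⟩
    · exact Finset.mem_image.2 ⟨t - 1, Finset.mem_range.2 (by omega), by simp [hu, h]⟩
  -- first appearance times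
  set tau : ℕ → ℕ := fun v => sInf {t | u t = v} with htau
  have htau_le : ∀ t v, u t = v → tau v ≤ t := fun t v h => Nat.sInf_le h
  have htau_mem : ∀ v ∈ s, u (tau v) = v ∧ tau v ≤ n := by
    intro v hv
    rw [hs] at hv
    obtain ⟨x, hx, hBx⟩ := Finset.mem_image.1 hv
    rw [Finset.mem_range] at hx
    have hx1 : u (x+1) = v := by simp [hu]; exact hBx
    have hne : {t | u t = v}.Nonempty := ⟨x+1, hx1⟩
    exact ⟨Nat.sInf_mem hne, le_trans (htau_le (x+1) v hx1) (by omega)⟩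
  have hr : u 0 ∈ s := hus 0 (by omega)
  have htau0 : ∀ v ∈ s, tau v = 0 → v = u 0 := by
    intro v hv h0
    have := (htau_mem v hv).1
    rw [h0] at this
    exact this.symm
  -- parents
  set par : ℕ → ℕ := fun v => u (tau v - 1) with hpar_def
  have hpar : ∀ v ∈ s, 1 ≤ tau v → par v ∈ s ∧ tau (par v) < tau v := by
    intro v hv h1
    have hle := (htau_mem v hv).2
    refine ⟨hus _ (by omega), ?_⟩
    have := htau_le (tau v - 1) (par v) rfl
    omega
  -- the non-root vertices
  set s2 : Finset ℕ := s.erase (u 0) with hs2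
  have hs2card : s2.card = m := by
    rw [hs2, Finset.card_erase_of_mem hr, hscard]
    rfl
  have hs2tau : ∀ v ∈ s2, 1 ≤ tau v ∧ v ∈ s := by
    intro v hv
    have hvs := Finset.mem_of_mem_erase hv
    have hvne := Finset.ne_of_mem_erase hv
    refine ⟨?_, hvs⟩
    by_contra h
    exact hvne (htau0 v hvs (by omega))
  -- first-appearance (tree) edges
  set F : ℕ → ℕ × ℕ := fun v => (min (par v) v, max (par v) v) with hF
  have hFeu : ∀ v ∈ s2, tau v - 1 < n ∧ eu (tau v - 1) = F v := by
    intro v hv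
    obtain ⟨h1, hvs⟩ := hs2tau v hv
    obtain ⟨huv, hle⟩ := htau_mem v hvs
    refine ⟨by omega, ?_⟩
    simp only [heu, hF, hpar_def, Prod.mk.injEq]
    rw [(by omega : tau v - 1 + 1 = tau v), huv]
    exact ⟨rfl, rfl⟩
  have hFinj : Set.InjOn F s2 := by
    intro v hv w hw hFvw
    by_contra hne
    simp only [hF, Prod.mk.injEq] at hFvw
    rcases pair_eq_cases hFvw.1 hFvw.2 with ⟨ha, hb⟩ | ⟨ha, hb⟩
    · exact hne hb
    · obtain ⟨hv1, hvs⟩ := hs2tau v hv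
      obtain ⟨hw1, hws⟩ := hs2tau w hw
      have p1 := (hpar v hvs hv1).2
      have p2 := (hpar w hws hw1).2
      rw [ha] at p1
      rw [← hb] at p2
      omega
  -- fibers and counting
  set fib : ℕ × ℕ → Finset ℕ := fun p => (Finset.range n).filter (fun t => eu t = p) with hfib
  have hfib_mem : ∀ p t, t ∈ fib p ↔ t < n ∧ eu t = p := by
    intro p t
    simp [hfib, Finset.mem_filter, Finset.mem_range]
  have heven : ∀ p, Even (fib p).card := by
    intro p
    apply even_card_of_invol (fib p) π
    · intro x hx
      rw [hfib_mem] at hx ⊢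
      exact ⟨hπlt x hx.1, (ho (π x) x (hπlt x hx.1) hx.1 (hπA x hx.1)).trans hx.2⟩
    · intro x hx
      exact hπinv x ((hfib_mem p x).1 hx).1
    · intro x hx
      exact hπne x ((hfib_mem p x).1 hx).1
  set Edges : Finset (ℕ × ℕ) := (Finset.range n).image eu with hE
  have hsum : ∑ p ∈ Edges, (fib p).card = n := by
    rw [hE, hfib]
    rw [← Finset.card_eq_sum_card_image eu (Finset.range n)]
    exact Finset.card_range n
  set T : Finset (ℕ × ℕ) := s2.image F with hT
  have hTsub : T ⊆ Edges := by
    intro p hp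
    rw [hT] at hp
    obtain ⟨v, hv, rfl⟩ := Finset.mem_image.1 hp
    obtain ⟨h1, h2⟩ := hFeu v hv
    rw [hE]
    exact Finset.mem_image.2 ⟨tau v - 1, Finset.mem_range.2 h1, h2⟩
  have hTcard : T.card = m := by
    rw [hT, Finset.card_image_of_injOn hFinj, hs2card]
  have hfib2 : ∀ p ∈ T, 2 ≤ (fib p).card := by
    intro p hp
    rw [hT] at hp
    obtain ⟨v, hv, rfl⟩ := Finset.mem_image.1 hp
    obtain ⟨h1, h2⟩ := hFeu v hv
    have hpos : 0 < (fib (F v)).card :=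
      Finset.card_pos.2 ⟨tau v - 1, (hfib_mem _ _).2 ⟨h1, h2⟩⟩
    obtain ⟨c, hc⟩ := heven (F v)
    omega
  have hsumT_le : ∑ p ∈ T, (fib p).card ≤ n := by
    rw [← hsum]
    exact Finset.sum_le_sum_of_subset hTsub
  have hsumT_ge : 2*m ≤ ∑ p ∈ T, (fib p).card := by
    calc 2*m = ∑ _p ∈ T, 2 := by rw [Finset.sum_const, hTcard]; ring
    _ ≤ ∑ p ∈ T, (fib p).card := Finset.sum_le_sum hfib2
  have hfibT : ∀ p ∈ T, (fib p).card = 2 := by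
    intro p hp
    by_contra hne2
    have hlt : ∑ q ∈ T, 2 < ∑ q ∈ T, (fib q).card :=
      Finset.sum_lt_sum hfib2 ⟨p, hp, by have := hfib2 p hp; omega⟩
    rw [Finset.sum_const, hTcard] at hlt
    simp only [smul_eq_mul] at hlt
    omega
  have hallT : ∀ t, t < n → eu t ∈ T := by
    intro t ht
    by_contra hnot
    have hmemE : eu t ∈ Edges := by
      rw [hE]; exact Finset.mem_image.2 ⟨t, Finset.mem_range.2 ht, rfl⟩
    have hins : insert (eu t) T ⊆ Edges := Finset.insert_subset hmemE hTsub
    have h1 : ∑ p ∈ insert (eu t) T, (fib p).card ≤ n := by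
      rw [← hsum]; exact Finset.sum_le_sum_of_subset hins
    rw [Finset.sum_insert hnot] at h1
    have hpos : 1 ≤ (fib (eu t)).card :=
      Finset.card_pos.2 ⟨t, (hfib_mem _ _).2 ⟨ht, rfl⟩⟩
    omega
  -- the endgame
  have hjn : j < n := lt_trans hjk hkn
  have hpjk : eu j = eu k := ho j k hjn hkn hAjk
  obtain ⟨v0, hv0s2, hFv0⟩ := Finset.mem_image.1 (hallT j hjn)
  have heujT : eu j ∈ T := hallT j hjn
  have hfibjk : fib (eu j) = {j, k} := by
    symm
    apply Finset.eq_of_subset_of_card_le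
    · intro t htm
      simp only [Finset.mem_insert, Finset.mem_singleton] at htm
      rcases htm with rfl | rfl
      · exact (hfib_mem _ _).2 ⟨hjn, rfl⟩
      · exact (hfib_mem _ _).2 ⟨hkn, hpjk.symm⟩
    · rw [hfibT (eu j) heujT]
      rw [Finset.card_insert_of_notMem (by simp [Nat.ne_of_lt hjk]), Finset.card_singleton]
  obtain ⟨hv0tau, hv0s⟩ := hs2tau v0 hv0s2
  -- the potential function
  set g : ℕ → ℕ := fun v => gA tau par v0 (tau v) v with hg
  have hgv0 : g v0 = 1 := gA_v0 tau par v0 (tau v0)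
  have hgpar : g (par v0) = 0 :=
    gA_zero s tau par v0 hpar (par v0) (hpar v0 hv0s hv0tau).1 (hpar v0 hv0s hv0tau).2
  have hstep : ∀ t, t < n → t ≠ j → t ≠ k → g (u (t+1)) = g (u t) := by
    intro t ht htj htk
    obtain ⟨w, hws2, hFw⟩ := Finset.mem_image.1 (hallT t ht)
    have hwv0 : w ≠ v0 := by
      intro h
      subst h
      have : t ∈ fib (eu j) := (hfib_mem _ _).2 ⟨ht, by rw [← hFw, hFv0]⟩
      rw [hfibjk] at this
      simp only [Finset.mem_insert, Finset.mem_singleton] at this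
      tauto
    obtain ⟨hw1, hws⟩ := hs2tau w hws2
    have hgw : g w = g (par w) := gA_step s tau par v0 hpar w hws hwv0 hw1
    have hFw' : min (u t) (u (t+1)) = min (par w) w ∧ max (u t) (u (t+1)) = max (par w) w := by
      have := hFw.symm
      simp only [heu, hF, Prod.mk.injEq] at this
      exact this
    rcases pair_eq_cases hFw'.1 hFw'.2 with ⟨ha, hb⟩ | ⟨ha, hb⟩
    · rw [ha, hb]; exact hgw
    · rw [ha, hb]; exact hgw.symm
  have htel : ∑ t ∈ Finset.range n, ((g (u (t+1)) : ℤ) - g (u t)) = 0 := by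
    rw [Finset.sum_range_sub (fun t => (g (u t) : ℤ)), hun0, sub_self]
  have hsubjk : ({j, k} : Finset ℕ) ⊆ Finset.range n := by
    intro t htm
    simp only [Finset.mem_insert, Finset.mem_singleton] at htm
    rw [Finset.mem_range]
    rcases htm with rfl | rfl <;> omega
  have hpairsum : ∑ t ∈ ({j, k} : Finset ℕ), ((g (u (t+1)) : ℤ) - g (u t)) = 0 := by
    rw [Finset.sum_subset hsubjk, htel]
    intro x hx hnx
    simp only [Finset.mem_insert, Finset.mem_singleton] at hnx
    push_neg at hnx
    rw [hstep x (Finset.mem_range.1 hx) hnx.1 hnx.2, sub_self]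
  rw [Finset.sum_pair (Nat.ne_of_lt hjk)] at hpairsum
  -- identify the two traversals
  have hFv0j : min (u j) (u (j+1)) = min (par v0) v0 ∧ max (u j) (u (j+1)) = max (par v0) v0 := by
    have := hFv0.symm
    simp only [heu, hF, Prod.mk.injEq] at this
    exact this
  have hFv0k : min (u k) (u (k+1)) = min (par v0) v0 ∧ max (u k) (u (k+1)) = max (par v0) v0 := by
    have : eu k = F v0 := by rw [← hpjk, hFv0]
    simp only [heu, hF, Prod.mk.injEq] at this
    exact this
  obtain ⟨e11, e12⟩ := huB j hjn
  obtain ⟨e21, e22⟩ := huB k hkn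
  rw [← e11, ← e12, ← e21, ← e22]
  rcases pair_eq_cases hFv0j.1 hFv0j.2 with ⟨ha1, hb1⟩ | ⟨ha1, hb1⟩ <;>
    rcases pair_eq_cases hFv0k.1 hFv0k.2 with ⟨ha2, hb2⟩ | ⟨ha2, hb2⟩
  · exfalso
    rw [ha1, hb1, ha2, hb2, hgv0, hgpar] at hpairsum
    norm_num at hpairsum
  · exact ⟨by rw [ha1, hb2], by rw [hb1, ha2]⟩
  · exact ⟨by rw [ha1, hb2], by rw [hb1, ha2]⟩
  · exfalso
    rw [ha1, hb1, ha2, hb2, hgv0, hgpar] at hpairsum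
    norm_num at hpairsum

/-- If `B` is an offspring of a Catalan word `A` of length `2m` with `m+1` distinct
letters, then whenever `a_j = a_k` with `j < k`, one has `b_{j−1} = b_k` and
`b_j = b_{k−1}` (cyclically). -/
theorem statement9 (m : ℕ) (hm : 1 ≤ m) (A B : ℕ → ℕ)
    (hA : IsCatalanWord (2*m) A) (hB : IsOffspring (2*m) A B)
    (hcard : numLetters (Finset.range (2*m)) B = m + 1) :
    ∀ j k, j < k → k < 2*m → A j = A k →
      B (prevIdx (2*m) j) = B k ∧ B j = B (prevIdx (2*m) k) :=
  statement9' m hm A B hA.1 hB hcard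
end

section
/- Let A₁…A_{2m} be an almost pair matched word (m ≥ 2) with m+1 distinct letters a₁,…,a_{m+1}, of which a₁,…,a_{m−1} each occur twice. Fix u, v ∈ ℤ^{m−1}. For n ≥ 1, let U_n be the set of tuples (i₁,…,i_{2m}) ∈ {1,…,n}^{2m} that are uv-matched: whenever A_j = A_k = a_l (j < k, 1 ≤ l ≤ m−1), both (i_{j−1} ∧ i_j) − (i_{k−1} ∧ i_k) = u_l and (i_{j−1} ∨ i_j) − (i_{k−1} ∨ i_k) = v_l hold, with i₀ := i_{2m}. Then #U_n ≤ 4^m n^{m+1} for all n ≥ 1. -/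
/-- Cyclic predecessor on `Fin n`. -/
def cpred {n : ℕ} (j : Fin n) : Fin n :=
  ⟨(j.val + n - 1) % n, Nat.mod_lt _ (Nat.lt_of_le_of_lt (Nat.zero_le _) j.isLt)⟩

/-- Position of `j` in the cyclic order starting at `s`. -/
def rho (N s j : ℕ) : ℕ := if s ≤ j then j - s else j + N - s

lemma cpred_val {N : ℕ} (j : Fin N) :
    (cpred j).val = if j.val = 0 then N - 1 else j.val - 1 := by
  have hN : 0 < N := Nat.lt_of_le_of_lt (Nat.zero_le _) j.isLt
  have hj : j.val < N := j.isLt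
  show (j.val + N - 1) % N = _
  split_ifs with h
  · rw [h]
    have h3 : 0 + N - 1 = N - 1 := by omega
    rw [h3]
    exact Nat.mod_eq_of_lt (by omega)
  · rw [Nat.mod_eq_sub_mod (show N ≤ j.val + N - 1 by omega)]
    have h2 : j.val + N - 1 - N = j.val - 1 := by omega
    rw [h2, Nat.mod_eq_of_lt (by omega)]

set_option maxHeartbeats 1000000
set_option synthInstance.maxHeartbeats 400000

/-- For an almost pair matched word `A` of length `2m` (`m ≥ 2`) with `m+1` distinct
letters `a₀,…,a_m`, of which `a₀,…,a_{m−2}` each occur twice, and any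
`u, v ∈ ℤ^{m−1}`, the number of `uv`-matched tuples in `{1,…,n}^{2m}` is at most
`4^m n^{m+1}`. -/
theorem statement11 (m : ℕ) (hm : 2 ≤ m) (A : Fin (2*m) → ℕ)
    (π : Fin (2*m) → Fin (2*m)) (hπinv : ∀ j, π (π j) = j)
    (hπfix : (Finset.univ.filter fun j => π j = j).card = 2)
    (hπA : ∀ j, A (π j) = A j)
    (a : ℕ → ℕ) (ha_inj : ∀ l l', l < m + 1 → l' < m + 1 → a l = a l' → l = l')
    (ha_img : Finset.univ.image A = (Finset.range (m + 1)).image a)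
    (ha_twice : ∀ l < m - 1, (Finset.univ.filter fun j => A j = a l).card = 2)
    (u v : ℕ → ℤ) (n : ℕ) (hn : 1 ≤ n) :
    Set.ncard {i : Fin (2*m) → ℤ |
      (∀ j, 1 ≤ i j ∧ i j ≤ (n : ℤ)) ∧
      ∀ j k : Fin (2*m), ∀ l, l < m - 1 → j < k → A j = a l → A k = a l →
        min (i (cpred j)) (i j) - min (i (cpred k)) (i k) = u l ∧
        max (i (cpred j)) (i j) - max (i (cpred k)) (i k) = v l} ≤ 4 ^ m * n ^ (m + 1) := by
  classical
  set S := {i : Fin (2*m) → ℤ |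
      (∀ j, 1 ≤ i j ∧ i j ≤ (n : ℤ)) ∧
      ∀ j k : Fin (2*m), ∀ l, l < m - 1 → j < k → A j = a l → A k = a l →
        min (i (cpred j)) (i j) - min (i (cpred k)) (i k) = u l ∧
        max (i (cpred j)) (i j) - max (i (cpred k)) (i k) = v l} with hS
  -- pick a fixed point `s` of `π`
  have hfix_pos : 0 < (Finset.univ.filter fun j => π j = j).card := by
    rw [hπfix]; norm_num
  obtain ⟨s, hsmem⟩ := Finset.card_pos.mp hfix_pos
  have hss : π s = s := (Finset.mem_filter.mp hsmem).2
  have hsval : s.val < 2*m := s.isLt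
  -- basic facts about rho
  have hρinj : ∀ j k : Fin (2*m), rho (2*m) s.val j.val = rho (2*m) s.val k.val → j = k := by
    intro j k h
    have hj := j.isLt
    have hk := k.isLt
    apply Fin.ext
    simp only [rho] at h
    split_ifs at h <;> omega
  have hρpred : ∀ j : Fin (2*m), j ≠ s →
      rho (2*m) s.val (cpred j).val + 1 = rho (2*m) s.val j.val := by
    intro j hj
    have hj' : j.val ≠ s.val := fun h => hj (Fin.ext h)
    have hjlt := j.isLt
    rw [cpred_val]
    simp only [rho]
    split_ifs <;> omega
  -- every position's letter is some `a l`
  have himg : ∀ j : Fin (2*m), ∃ l, l < m + 1 ∧ a l = A j := by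
    intro j
    have h : A j ∈ Finset.univ.image A := Finset.mem_image_of_mem A (Finset.mem_univ j)
    rw [ha_img] at h
    obtain ⟨l, hl, hal⟩ := Finset.mem_image.mp h
    exact ⟨l, Finset.mem_range.mp hl, hal⟩
  have hfibers : ∀ l, l < m + 1 → 1 ≤ (Finset.univ.filter fun j => A j = a l).card := by
    intro l hl
    have h : a l ∈ Finset.univ.image A := by
      rw [ha_img]; exact Finset.mem_image_of_mem a (Finset.mem_range.mpr hl)
    obtain ⟨j, _, hj⟩ := Finset.mem_image.mp h
    exact Finset.card_pos.mpr ⟨j, Finset.mem_filter.mpr ⟨Finset.mem_univ j, hj⟩⟩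
  have hsum : ∑ l ∈ Finset.range (m+1), (Finset.univ.filter fun j => A j = a l).card = 2*m := by
    have h1 : (Finset.univ : Finset (Fin (2*m))).card
        = ∑ b ∈ Finset.univ.image A, (Finset.univ.filter fun j => A j = b).card :=
      Finset.card_eq_sum_card_fiberwise (fun x _ => Finset.mem_image_of_mem A (Finset.mem_univ x))
    rw [ha_img, Finset.sum_image (fun x hx y hy hxy =>
      ha_inj x y (Finset.mem_range.mp hx) (Finset.mem_range.mp hy) hxy)] at h1
    rw [← h1]
    simp
  have hsing : ∀ l, m - 1 ≤ l → l < m + 1 →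
      (Finset.univ.filter fun j => A j = a l).card = 1 := by
    intro l hl1 hl2
    have e1 : ∑ l ∈ Finset.range (m+1), (Finset.univ.filter fun j => A j = a l).card
        = (∑ l ∈ Finset.range m, (Finset.univ.filter fun j => A j = a l).card)
          + (Finset.univ.filter fun j => A j = a m).card :=
      Finset.sum_range_succ _ m
    have e2 : ∑ l ∈ Finset.range m, (Finset.univ.filter fun j => A j = a l).card
        = (∑ l ∈ Finset.range (m-1), (Finset.univ.filter fun j => A j = a l).card)
          + (Finset.univ.filter fun j => A j = a (m-1)).card := by
      have h := Finset.sum_range_succ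
        (fun l => (Finset.univ.filter fun j => A j = a l).card) (m-1)
      rw [show m - 1 + 1 = m by omega] at h
      exact h
    have e3 : ∑ l ∈ Finset.range (m-1), (Finset.univ.filter fun j => A j = a l).card
        = 2*(m-1) := by
      rw [Finset.sum_congr rfl (fun l hl => ha_twice l (Finset.mem_range.mp hl))]
      simp [mul_comm]
    have h1 := hfibers (m-1) (by omega)
    have h2 := hfibers m (by omega)
    have hl' : l = m - 1 ∨ l = m := by omega
    rcases hl' with rfl | rfl <;> omega
  have hletter : ∀ j : Fin (2*m), π j ≠ j → ∃ l, l < m - 1 ∧ A j = a l := by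
    intro j hj
    obtain ⟨l, hl, hal⟩ := himg j
    refine ⟨l, ?_, hal.symm⟩
    by_contra h
    have hsl := hsing l (by omega) hl
    have hsub : ({j, π j} : Finset (Fin (2*m))) ⊆ Finset.univ.filter fun k => A k = a l := by
      intro x hx
      rw [Finset.mem_insert, Finset.mem_singleton] at hx
      rcases hx with rfl | rfl
      · exact Finset.mem_filter.mpr ⟨Finset.mem_univ _, hal.symm⟩
      · exact Finset.mem_filter.mpr ⟨Finset.mem_univ _, by rw [hπA]; exact hal.symm⟩
    have hp : ({j, π j} : Finset (Fin (2*m))).card = 2 := Finset.card_pair (Ne.symm hj)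
    have := Finset.card_le_card hsub
    omega
  -- the "determined" positions
  set P : Fin (2*m) → Prop :=
    fun j => π j ≠ j ∧ rho (2*m) s.val (π j).val < rho (2*m) s.val j.val with hP
  set detF := Finset.univ.filter P with hdetF
  set nonF := Finset.univ.filter (fun j => ¬ π j = j) with hnonF
  have hnonF_card : nonF.card = 2*m - 2 := by
    have h := Finset.card_filter_add_card_filter_not
      (s := (Finset.univ : Finset (Fin (2*m)))) (p := fun j => π j = j)
    rw [hπfix, Finset.card_univ, Fintype.card_fin] at h
    rw [hnonF]
    omega
  have hdet_sub : detF ⊆ nonF := by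
    intro j hj
    rw [hdetF, Finset.mem_filter] at hj
    rw [hnonF, Finset.mem_filter]
    exact ⟨Finset.mem_univ _, hj.2.1⟩
  have hcard_bij : detF.card = (nonF \ detF).card := by
    apply Finset.card_bij (fun j _ => π j)
    · intro j hj
      rw [hdetF, Finset.mem_filter] at hj
      obtain ⟨_, hne, hlt⟩ := hj
      rw [Finset.mem_sdiff, hnonF, hdetF, Finset.mem_filter, Finset.mem_filter]
      refine ⟨⟨Finset.mem_univ _, by rw [hπinv]; exact fun h => hne h.symm⟩, ?_⟩
      intro hmem
      obtain ⟨_, _, hlt'⟩ := hmem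
      rw [hπinv] at hlt'
      exact absurd hlt' (not_lt.mpr (le_of_lt hlt))
    · intro j hj k hk h
      have := congrArg π h
      rwa [hπinv, hπinv] at this
    · intro x hx
      rw [Finset.mem_sdiff, hnonF, Finset.mem_filter, hdetF, Finset.mem_filter] at hx
      obtain ⟨⟨_, hne⟩, hnd⟩ := hx
      have hne' : π x ≠ x := hne
      have hρne : rho (2*m) s.val (π x).val ≠ rho (2*m) s.val x.val :=
        fun h => hne' (hρinj _ _ h)
      have hlt : rho (2*m) s.val x.val < rho (2*m) s.val (π x).val := by
        rcases lt_or_ge (rho (2*m) s.val (π x).val) (rho (2*m) s.val x.val) with h | h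
        · exact absurd ⟨hne', h⟩ (fun hc => hnd ⟨Finset.mem_univ _, hc⟩)
        · omega
      have hmem : π x ∈ detF := by
        rw [hdetF, Finset.mem_filter]
        refine ⟨Finset.mem_univ _, ?_, ?_⟩
        · rw [hπinv]; exact fun h => hne' h.symm
        · rw [hπinv]; exact hlt
      exact ⟨π x, hmem, hπinv x⟩
  have hdet_card : detF.card = m - 1 := by
    have h := Finset.card_sdiff_add_card_eq_card hdet_sub
    omega
  set freeF := Finset.univ.filter (fun j => ¬ P j) with hfreeF
  have hfree_card : freeF.card = m + 1 := by
    have h := Finset.card_filter_add_card_filter_not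
      (s := (Finset.univ : Finset (Fin (2*m)))) (p := P)
    rw [Finset.card_univ, Fintype.card_fin] at h
    rw [hfreeF]
    rw [hdetF] at hdet_card
    omega
  -- reconstruction lemma: equal flags + equal free values ⇒ equal
  have hmain : ∀ i i' : Fin (2*m) → ℤ, i ∈ S → i' ∈ S →
      (∀ j, (i j ≤ i (cpred j)) ↔ (i' j ≤ i' (cpred j))) →
      (∀ j ∈ freeF, i j = i' j) → i = i' := by
    intro i i' hi hi' hflag hfree
    rw [hS, Set.mem_setOf_eq] at hi hi'
    funext j
    suffices h : ∀ r : ℕ, ∀ j : Fin (2*m), rho (2*m) s.val j.val = r → i j = i' j from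
      h _ j rfl
    intro r
    induction r using Nat.strong_induction_on with
    | _ r IH =>
      intro j hj
      by_cases hdj : P j
      · obtain ⟨hne, hlt⟩ := hdj
        have hjs : j ≠ s := by rintro rfl; exact hne hss
        have hks : π j ≠ s := by
          intro h
          have h2 := hπinv j
          rw [h, hss] at h2
          exact hjs h2.symm
        have hcpk := hρpred (π j) hks
        have e2 : i (π j) = i' (π j) := IH _ (by omega) _ rfl
        have e3 : i (cpred (π j)) = i' (cpred (π j)) := IH _ (by omega) _ rfl
        obtain ⟨l, hlm, hAj⟩ := hletter j hne
        have hAk : A (π j) = a l := by rw [hπA]; exact hAj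
        have key : min (i (cpred j)) (i j) = min (i' (cpred j)) (i' j) ∧
                   max (i (cpred j)) (i j) = max (i' (cpred j)) (i' j) := by
          rcases lt_trichotomy j (π j) with h | h | h
          · obtain ⟨c1, c2⟩ := hi.2 j (π j) l hlm h hAj hAk
            obtain ⟨c1', c2'⟩ := hi'.2 j (π j) l hlm h hAj hAk
            rw [e2, e3] at c1 c2
            constructor <;> linarith
          · exact absurd h.symm hne
          · obtain ⟨c1, c2⟩ := hi.2 (π j) j l hlm h hAk hAj
            obtain ⟨c1', c2'⟩ := hi'.2 (π j) j l hlm h hAk hAj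
            rw [e2, e3] at c1 c2
            constructor <;> linarith
        by_cases hle : i j ≤ i (cpred j)
        · have hle' : i' j ≤ i' (cpred j) := (hflag j).mp hle
          calc i j = min (i (cpred j)) (i j) := (min_eq_right hle).symm
            _ = min (i' (cpred j)) (i' j) := key.1
            _ = i' j := min_eq_right hle'
        · have hle' : ¬ i' j ≤ i' (cpred j) := fun h => hle ((hflag j).mpr h)
          calc i j = max (i (cpred j)) (i j) := (max_eq_right (le_of_not_ge hle)).symm
            _ = max (i' (cpred j)) (i' j) := key.2
            _ = i' j := max_eq_right (le_of_not_ge hle')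
      · exact hfree j (by rw [hfreeF, Finset.mem_filter]; exact ⟨Finset.mem_univ _, hdj⟩)
  -- the injection into flags × free values
  let β := (Fin (2*m) → Bool) × ({x // x ∈ freeF} → {y // y ∈ Finset.Icc (1:ℤ) (n:ℤ)})
  let f : S → β := fun ip =>
    (fun j => decide (ip.val j ≤ ip.val (cpred j)),
     fun x => ⟨ip.val x.val, Finset.mem_Icc.mpr ⟨(ip.property.1 x.val).1, (ip.property.1 x.val).2⟩⟩)
  have hinj : Function.Injective f := by
    rintro ⟨i, hi⟩ ⟨i', hi'⟩ h
    have h1 := congrArg Prod.fst h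
    have h2 := congrArg Prod.snd h
    apply Subtype.ext
    apply hmain i i' hi hi'
    · intro j
      have := congrFun h1 j
      simp only [f, decide_eq_decide] at this
      exact this
    · intro j hj
      have := congrFun h2 ⟨j, hj⟩
      simpa [f] using this
  have hcard : Set.ncard S ≤ Fintype.card β := by
    rw [← Nat.card_coe_set_eq, ← Nat.card_eq_fintype_card]
    exact Nat.card_le_card_of_injective f hinj
  have hβ : Fintype.card β = 4^m * n^(m+1) := by
    have hIcc : (Finset.Icc (1:ℤ) (n:ℤ)).card = n := by
      rw [Int.card_Icc]
      simp
    have h1 : Fintype.card β = 2^(2*m) * n^(m+1) := by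
      simp [β, Fintype.card_prod, Fintype.card_fun, Fintype.card_coe, hIcc, hfree_card]
    rw [h1, show (2:ℕ)^(2*m) = 4^m by rw [pow_mul]; norm_num]
  rw [hβ] at hcard
  exact hcard
end

section
/- Fix m ≥ 1 and σ ∈ NC₂(2m) with Kreweras complement blocks V₁,…,V_{m+1}, each block V_u = {v₁^u < … < v_{l_u}^u}. A tuple i ∈ {1,…,n}^{2m} is N-Catalan corresponding to σ (i.e. |i_{j−1} − i_k| ∨ |i_j − i_{k−1}| ≤ N whenever (j,k) ∈ σ, with i₀ := i_{2m}) if and only if there exist a unique k ∈ S(σ,N) := {k ∈ {−N,…,N}^{2m} : ∑_{j=1}^{l_s} k_{v_j^s} = 0 for s = 1,…,m+1} and a unique 0-Catalan tuple j ∈ {1,…,n}^{2m} corresponding to σ such that i_{v_x^u} = j_{v_x^u} + ∑_{w=1}^{x} k_{v_w^u} for all x, u. -/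
/-- A fixed-point-free involution of `Fin (2*m)` whose pairing is non-crossing. -/
def IsNCPairing (m : ℕ) (π : Equiv.Perm (Fin (2*m))) : Prop :=
  (∀ j, π (π j) = j) ∧ (∀ j, π j ≠ j) ∧
  ¬ ∃ a b c d : Fin (2*m), a < b ∧ b < c ∧ c < d ∧ π a = c ∧ π b = d

/-- Position of the interlaced point `(i, b)`: the element `i` sits at `2i`,
its barred copy `ī` at `2i+1`. -/
def interPos (m : ℕ) (p : Fin (2*m) × Bool) : ℕ :=
  2 * p.1.val + (if p.2 then 1 else 0)

/-- The relation on the interlaced set `{1,1̄,…,2m,2m̄}` combining the pairing `π`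
(on unbarred points) and the relation `E` (on barred points). -/
def CombinedRel (m : ℕ) (π : Equiv.Perm (Fin (2*m)))
    (E : Fin (2*m) → Fin (2*m) → Prop) (p q : Fin (2*m) × Bool) : Prop :=
  match p, q with
  | (i, false), (j, false) => i = j ∨ π i = j
  | (i, true), (j, true) => E i j
  | _, _ => False

/-- Non-crossing property of the combined partition `σ ∪ σ̄` on the interlaced set. -/
def CombinedNC (m : ℕ) (π : Equiv.Perm (Fin (2*m)))
    (E : Fin (2*m) → Fin (2*m) → Prop) : Prop :=
  ∀ p q r s : Fin (2*m) × Bool,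
    interPos m p < interPos m q → interPos m q < interPos m r →
    interPos m r < interPos m s →
    CombinedRel m π E p r → CombinedRel m π E q s → CombinedRel m π E p q

/-- `E` is (the equivalence relation of) the Kreweras complement of the
non-crossing pairing `π`: it is an equivalence relation on the barred copies such
that `σ ∪ σ̄` is non-crossing, and it is maximal among such relations. -/
def IsKreweras (m : ℕ) (π : Equiv.Perm (Fin (2*m)))
    (E : Fin (2*m) → Fin (2*m) → Prop) : Prop :=
  Equivalence E ∧ CombinedNC m π E ∧
  ∀ E' : Fin (2*m) → Fin (2*m) → Prop, Equivalence E' → CombinedNC m π E' →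
    ∀ i j, E' i j → E i j

/-!
Write `τ a = π (a + 1)`, indices mod `2m`. Non-crossingness of `σ ∪ K(σ)` forces `τ` to send
each element of a Kreweras block to the next element of that block in cyclic order. In these terms
the `N`-Catalan condition reads `|i x - i (τ x)| ≤ N` and the `0`-Catalan condition reads
`j ∘ τ = j`. Along a block, the prefix sums of the increments `i w - i (τ⁻¹ w)` telescope to
`i t - i (max of the block)`. Conversely, if `i = j + (prefix sums of k)` with `j ∘ τ = j` and
`k` summing to zero on every block, comparing `t` with `τ t` gives `k = i - i ∘ τ⁻¹`, hence
`j = i ∘ max`. So the decomposition exists and is unique, and its increments are bounded by `N`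
exactly when `i` is `N`-Catalan.
-/

open Finset

/-- `c` lies strictly inside the cyclic arc from `a` to `b`; for `b = a` the arc is everything
except `a`. -/
def CyclicBtw {α : Type*} [LinearOrder α] (a b c : α) : Prop :=
  (a < c ∧ c < b) ∨ (b ≤ a ∧ a < c) ∨ (b ≤ a ∧ c < b)

/-- `τ` sends each element to the next element of its `E`-block, in cyclic order. -/
structure IsBlockCycle {α : Type*} [LinearOrder α] (E : α → α → Prop) (τ : Equiv.Perm α) :
    Prop where
  rel_apply : ∀ a, E a (τ a)
  not_cyclicBtw : ∀ {a c}, E a c → ¬ CyclicBtw a (τ a) c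

lemma filter_and_le_eq_insert {α : Type*} [LinearOrder α] [Fintype α] {p : α → Prop}
    [DecidablePred p] {t : α} (ht : p t) :
    univ.filter (fun w => p w ∧ w ≤ t) = insert t (univ.filter (fun w => p w ∧ w < t)) := by
  ext w
  simp only [mem_filter, mem_univ, true_and, mem_insert, le_iff_lt_or_eq]
  constructor
  · rintro ⟨hw, hlt | rfl⟩ <;> tauto
  · rintro (rfl | ⟨hw, hlt⟩) <;> tauto

section BlockMax

variable {α : Type*} [LinearOrder α] [Fintype α] {E : α → α → Prop} [DecidableRel E]

def blockMax (hE : Equivalence E) (t : α) : α :=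
  (univ.filter (E · t)).max' ⟨t, by simpa using hE.refl t⟩

variable (hE : Equivalence E) {s t w : α}

lemma blockMax_rel : E (blockMax hE t) t :=
  (mem_filter.1 ((univ.filter (E · t)).max'_mem _)).2

lemma le_blockMax (hw : E w t) : w ≤ blockMax hE t :=
  (univ.filter (E · t)).le_max' w (by simpa using hw)

lemma blockMax_congr (hst : E s t) : blockMax hE s = blockMax hE t := by
  have : univ.filter (E · s) = univ.filter (E · t) :=
    filter_congr fun w _ => ⟨fun h => hE.trans h hst, fun h => hE.trans h (hE.symm hst)⟩
  simp only [blockMax, this]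

end BlockMax

namespace IsBlockCycle

variable {α : Type*} [LinearOrder α] {E : α → α → Prop} {τ : Equiv.Perm α}
  (h : IsBlockCycle E τ) {a c t v : α}
include h

lemma apply_mem_Ioc_of_lt (hac : E a c) (hlt : a < c) : τ a ∈ Set.Ioc a c := by
  have := h.not_cyclicBtw hac
  constructor
  · by_contra! hle; exact this (Or.inr (Or.inl ⟨hle, hlt⟩))
  · by_contra! hgt; exact this (Or.inl ⟨hlt, hgt⟩)

lemma mem_Icc_of_apply_le (hle : τ a ≤ a) (hac : E a c) : c ∈ Set.Icc (τ a) a := by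
  have := h.not_cyclicBtw hac
  constructor
  · by_contra! hlt; exact this (Or.inr (Or.inr ⟨hle, hlt⟩))
  · by_contra! hlt; exact this (Or.inr (Or.inl ⟨hle, hlt⟩))

lemma apply_le_iff (hvt : E v t) : τ v ≤ t ↔ v < t ∨ τ v ≤ v := by
  rcases le_or_gt (τ v) v with hle | hlt
  · simp [hle, (h.mem_Icc_of_apply_le hle hvt).1]
  · simp only [hlt.not_ge, or_false]
    exact ⟨hlt.trans_le, fun hvt' => (h.apply_mem_Ioc_of_lt hvt hvt').2⟩

variable (hE : Equivalence E)
include hE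

lemma rel_apply_left_iff : E (τ a) c ↔ E a c :=
  ⟨hE.trans (h.rel_apply a), hE.trans (hE.symm (h.rel_apply a))⟩

lemma rel_apply_right_iff : E c (τ a) ↔ E c a :=
  ⟨fun hc => hE.trans hc (hE.symm (h.rel_apply a)), fun hc => hE.trans hc (h.rel_apply a)⟩

variable [Fintype α] [DecidableRel E]

lemma apply_le_self_iff (hvt : E v t) : τ v ≤ v ↔ v = blockMax hE t := by
  constructor
  · intro hle
    exact le_antisymm (le_blockMax hE hvt)
      (h.mem_Icc_of_apply_le hle (hE.trans hvt (hE.symm (blockMax_rel hE)))).2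
  · rintro rfl
    exact le_blockMax hE ((h.rel_apply_left_iff hE).2 hvt)

variable {M : Type*} [AddCommGroup M]

lemma filter_apply_le_eq_insert :
    univ.filter (fun v => E (τ v) t ∧ τ v ≤ t)
      = insert (blockMax hE t) (univ.filter (fun v => E v t ∧ v < t)) := by
  ext v
  simp only [mem_filter, mem_univ, true_and, mem_insert, h.rel_apply_left_iff hE]
  constructor
  · rintro ⟨hvt, hle⟩
    rcases (h.apply_le_iff hvt).1 hle with hlt | hmax
    · exact Or.inr ⟨hvt, hlt⟩
    · exact Or.inl ((h.apply_le_self_iff hE hvt).1 hmax)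
  · rintro (rfl | ⟨hvt, hlt⟩)
    · refine ⟨blockMax_rel hE, (h.apply_le_iff (blockMax_rel hE)).2 (Or.inr ?_)⟩
      exact (h.apply_le_self_iff hE (blockMax_rel hE)).2 rfl
    · exact ⟨hvt, (h.apply_le_iff hvt).2 (Or.inl hlt)⟩

lemma sum_filter_le_sub_symm_apply (f : α → M) (t : α) :
    ∑ w ∈ univ.filter (fun w => E w t ∧ w ≤ t), (f w - f (τ.symm w))
      = f t - f (blockMax hE t) := by
  have hmax : blockMax hE t ∉ univ.filter (fun v => E v t ∧ v < t) := by
    simp [(le_blockMax hE (hE.refl t)).not_gt]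
  have hshift : ∑ w ∈ univ.filter (fun w => E w t ∧ w ≤ t), f (τ.symm w)
      = ∑ v ∈ univ.filter (fun v => E (τ v) t ∧ τ v ≤ t), f v :=
    (sum_equiv τ (by simp) (by simp)).symm
  rw [sum_sub_distrib, hshift, h.filter_apply_le_eq_insert hE, sum_insert hmax,
    filter_and_le_eq_insert (p := (E · t)) (hE.refl t), sum_insert (by simp)]
  abel

lemma sum_filter_sub_symm_apply (f : α → M) (t : α) :
    ∑ w ∈ univ.filter (E · t), (f w - f (τ.symm w)) = 0 := by
  rw [sum_sub_distrib, sub_eq_zero]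
  exact sum_equiv τ (by simp [h.rel_apply_left_iff hE]) (by simp)

lemma sum_filter_le_apply {k : α → M} (hk : ∀ t, ∑ w ∈ univ.filter (E · t), k w = 0)
    (x : α) :
    ∑ w ∈ univ.filter (fun w => E w (τ x) ∧ w ≤ τ x), k w
      = ∑ w ∈ univ.filter (fun w => E w x ∧ w ≤ x), k w + k (τ x) := by
  simp only [h.rel_apply_right_iff hE]
  rcases lt_or_ge x (τ x) with hlt | hle
  · have hsplit : univ.filter (fun w => E w x ∧ w ≤ τ x)
        = insert (τ x) (univ.filter (fun w => E w x ∧ w ≤ x)) := by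
      ext w
      simp only [mem_filter, mem_univ, true_and, mem_insert]
      constructor
      · rintro ⟨hwx, hw⟩
        rcases hw.lt_or_eq with hw | rfl
        · refine Or.inr ⟨hwx, not_lt.1 fun hxw => hw.not_ge ?_⟩
          exact (h.apply_mem_Ioc_of_lt (hE.symm hwx) hxw).2
        · exact Or.inl rfl
      · rintro (rfl | ⟨hwx, hw⟩)
        · exact ⟨hE.symm (h.rel_apply x), le_rfl⟩
        · exact ⟨hwx, hw.trans hlt.le⟩
    rw [hsplit, sum_insert (by simp [hlt.not_ge]), add_comm]
  · have hblock : univ.filter (fun w => E w x ∧ w ≤ x) = univ.filter (E · x) :=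
      filter_congr fun w _ =>
        and_iff_left_of_imp fun hwx => (h.mem_Icc_of_apply_le hle (hE.symm hwx)).2
    have hmin : univ.filter (fun w => E w x ∧ w ≤ τ x) = {τ x} := by
      ext w
      simp only [mem_filter, mem_univ, true_and, mem_singleton]
      constructor
      · rintro ⟨hwx, hw⟩
        exact le_antisymm hw (h.mem_Icc_of_apply_le hle (hE.symm hwx)).1
      · rintro rfl
        exact ⟨hE.symm (h.rel_apply x), le_rfl⟩
    rw [hblock, hmin, hk, sum_singleton, zero_add]

lemma eq_of_decomposition {i j k : α → M} (hk : ∀ t, ∑ w ∈ univ.filter (E · t), k w = 0)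
    (hj : ∀ x, j x = j (τ x))
    (hi : ∀ t, i t = j t + ∑ w ∈ univ.filter (fun w => E w t ∧ w ≤ t), k w) :
    k = (fun w => i w - i (τ.symm w)) ∧ j = fun t => i (blockMax hE t) := by
  have hkτ : ∀ x, k (τ x) = i (τ x) - i x := fun x => by
    rw [hi, hi x, ← hj, h.sum_filter_le_apply hE hk]
    abel
  have hkD : k = fun w => i w - i (τ.symm w) :=
    funext fun w => by simpa using hkτ (τ.symm w)
  refine ⟨hkD, funext fun t => ?_⟩
  have hit := hi t
  rw [hkD, h.sum_filter_le_sub_symm_apply hE] at hit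
  rw [eq_sub_of_add_eq hit.symm, sub_sub_cancel]

end IsBlockCycle

def krewerasPerm {n : ℕ} (π : Equiv.Perm (Fin n)) : Equiv.Perm (Fin n) :=
  (finRotate n).trans π

lemma krewerasPerm_apply {n : ℕ} (π : Equiv.Perm (Fin n)) (a : Fin n) :
    krewerasPerm π a = π (finRotate n a) :=
  rfl

lemma val_finRotate {n : ℕ} (a : Fin n) :
    (finRotate n a : ℕ) = if (a : ℕ) + 1 = n then 0 else (a : ℕ) + 1 := by
  obtain ⟨k, rfl⟩ : ∃ k, n = k + 1 := Nat.exists_eq_succ_of_ne_zero (Fin.pos a).ne'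
  rw [coe_finRotate]
  simp [Fin.ext_iff]

lemma val_finRotate_cases {n : ℕ} (a : Fin n) :
    (finRotate n a : ℕ) = a + 1 ∨ ((a : ℕ) + 1 = n ∧ (finRotate n a : ℕ) = 0) := by
  rw [val_finRotate]
  split_ifs <;> omega

lemma cpred_eq_finRotate_symm {n : ℕ} (a : Fin n) : cpred a = (finRotate n).symm a := by
  obtain ⟨b, rfl⟩ := (finRotate n).surjective a
  have hb := b.isLt
  ext
  simp only [cpred, val_finRotate, Equiv.symm_apply_apply]
  split_ifs with h
  · rw [Nat.mod_eq_of_lt (by omega)]; omega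
  · rw [show (b : ℕ) + 1 + n - 1 = b + n by omega, Nat.add_mod_right, Nat.mod_eq_of_lt hb]

lemma forall_pair_cpred_iff {α : Type*} {n : ℕ} {π : Equiv.Perm (Fin n)}
    (hπ : ∀ j, π (π j) = j) {R : α → α → Prop} (hR : ∀ a b, R a b → R b a)
    (f : Fin n → α) :
    (∀ j k, π j = k → R (f (cpred j)) (f k) ∧ R (f j) (f (cpred k))) ↔
      ∀ x, R (f x) (f (krewerasPerm π x)) := by
  simp only [cpred_eq_finRotate_symm, krewerasPerm_apply]
  constructor
  · intro hf x
    simpa only [Equiv.symm_apply_apply] using (hf (finRotate n x) _ rfl).1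
  · rintro hf j _ rfl
    refine ⟨by simpa only [Equiv.apply_symm_apply] using hf ((finRotate n).symm j), hR _ _ ?_⟩
    simpa only [Equiv.apply_symm_apply, hπ] using hf ((finRotate n).symm (π j))

def Crosses (a b c d : ℕ) : Prop :=
  a < c ∧ c < b ∧ b < d ∨ c < a ∧ a < d ∧ d < b

variable {m : ℕ} {π : Equiv.Perm (Fin (2*m))} {E : Fin (2*m) → Fin (2*m) → Prop}

lemma IsNCPairing.not_crosses (hπ : IsNCPairing m π) (x u : Fin (2*m)) :
    ¬ Crosses x (π x) u (π u) := by
  rintro (⟨h₁, h₂, h₃⟩ | ⟨h₁, h₂, h₃⟩)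
  · exact hπ.2.2 ⟨x, u, π x, π u, h₁, h₂, h₃, rfl, rfl⟩
  · exact hπ.2.2 ⟨u, x, π u, π x, h₁, h₂, h₃, rfl, rfl⟩

lemma CombinedNC.not_crosses (hc : CombinedNC m π E) {x y u v : Fin (2*m)} (hxy : π x = y)
    (huv : E u v) : ¬ Crosses (2 * x) (2 * y) (2 * u + 1) (2 * v + 1) := by
  rintro (⟨h₁, h₂, h₃⟩ | ⟨h₁, h₂, h₃⟩)
  · exact hc (x, false) (u, true) (y, false) (v, true) (by simp [interPos]; omega)
      (by simp [interPos]; omega) (by simp [interPos]; omega) (Or.inr hxy) huv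
  · exact hc (u, true) (x, false) (v, true) (y, false) (by simp [interPos]; omega)
      (by simp [interPos]; omega) (by simp [interPos]; omega) huv (Or.inr hxy)

lemma combinedNC_of (hπ : IsNCPairing m π)
    (hbarred : ∀ p q r s, p < q → q < r → r < s → E p r → E q s → E p q)
    (hmixed : ∀ x u v : Fin (2*m), E u v →
      ¬ Crosses (2 * x) (2 * π x) (2 * u + 1) (2 * v + 1)) :
    CombinedNC m π E := by
  rintro ⟨p, _ | _⟩ ⟨q, _ | _⟩ ⟨r, _ | _⟩ ⟨s, _ | _⟩ h₁ h₂ h₃ hpr hqs <;>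
    simp only [interPos, CombinedRel, Bool.false_eq_true, if_true, if_false]
      at h₁ h₂ h₃ hpr hqs ⊢
  · obtain rfl | rfl := hpr; · omega
    obtain rfl | rfl := hqs; · omega
    exact (hπ.not_crosses p q (Or.inl ⟨by omega, by omega, by omega⟩)).elim
  · obtain rfl | rfl := hpr; · omega
    exact hmixed p q s hqs (Or.inl ⟨by omega, by omega, by omega⟩)
  · obtain rfl | rfl := hqs; · omega
    exact hmixed q p r hpr (Or.inr ⟨by omega, by omega, by omega⟩)
  · exact hbarred p q r s (by omega) (by omega) (by omega) hpr hqs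

namespace IsKreweras

variable (hπ : IsNCPairing m π) (hE : IsKreweras m π E)
include hπ hE

/-- If `c` lay strictly between `a` and `τ a`, the barred chord `{a, c}` would cross the
`π`-chord `{a + 1, τ a}`. -/
lemma not_cyclicBtw {a c : Fin (2*m)} (hac : E a c) : ¬ CyclicBtw a (krewerasPerm π a) c := by
  rw [krewerasPerm_apply]
  have hs := val_finRotate_cases a
  set s := finRotate _ a
  have hbs : π (π s) = s := hπ.1 s
  have n₁ := hE.2.1.not_crosses (rfl : π s = π s) hac
  have n₂ := hE.2.1.not_crosses hbs hac
  have n₃ := hE.2.1.not_crosses hbs (hE.1.symm hac)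
  have n₄ := hE.2.1.not_crosses (rfl : π s = π s) (hE.1.symm hac)
  unfold Crosses at n₁ n₂ n₃ n₄
  unfold CyclicBtw
  omega

/-- By maximality it suffices that `{a, τ a}` can be joined in the complement: a `π`-chord
crossing the barred chord `{a, τ a}` would cross the `π`-chord `{a + 1, τ a}` beside it. -/
lemma rel_apply (a : Fin (2*m)) : E a (krewerasPerm π a) := by
  rw [krewerasPerm_apply]
  have hs := val_finRotate_cases a
  generalize finRotate _ a = s at hs ⊢
  generalize hb : π s = b
  have hbs : π b = s := by rw [← hb, hπ.1]
  refine hE.2.2 (fun x y => x = y ∨ x = a ∧ y = b ∨ x = b ∧ y = a) ⟨?_, ?_, ?_⟩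
    (combinedNC_of hπ ?_ ?_) a b (Or.inr (Or.inl ⟨rfl, rfl⟩))
  · exact fun x => Or.inl rfl
  · intro x y; tauto
  · rintro x y z (rfl | ⟨rfl, rfl⟩ | ⟨rfl, rfl⟩) h <;> grind
  · rintro p q r t hpq hqr hrt (rfl | ⟨rfl, rfl⟩ | ⟨rfl, rfl⟩)
      (rfl | ⟨rfl, rfl⟩ | ⟨rfl, rfl⟩) <;> omega
  · intro x u v huv hcross
    have e₁ : x = s → π x = b := by rintro rfl; exact hb
    have e₂ : x = b → π x = s := by rintro rfl; exact hbs
    have e₃ : π x = s → x = b := fun h => by rw [← hπ.1 x, h, hb]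
    have e₄ : π x = b → x = s := fun h => by rw [← hπ.1 x, h, hbs]
    have n₁ := hπ.not_crosses x s
    have n₂ := hπ.not_crosses s x
    have n₃ := hπ.not_crosses x b
    have n₄ := hπ.not_crosses b x
    rw [hb] at n₁ n₂
    rw [hbs] at n₃ n₄
    rcases huv with rfl | ⟨rfl, rfl⟩ | ⟨rfl, rfl⟩ <;>
      rcases hcross with ⟨h₁, h₂, h₃⟩ | ⟨h₁, h₂, h₃⟩
    · omega
    · omega
    · exact n₁ (Or.inl ⟨by omega, by omega, by omega⟩)
    · exact n₂ (Or.inl ⟨by omega, by omega, by omega⟩)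
    · rcases hs with hs | ⟨ha, hs⟩
      · exact n₃ (Or.inl ⟨by omega, by omega, by omega⟩)
      · exact n₂ (Or.inl ⟨by omega, by omega, by omega⟩)
    · exact n₄ (Or.inl ⟨by omega, by omega, by omega⟩)

lemma isBlockCycle : IsBlockCycle E (krewerasPerm π) :=
  ⟨hE.rel_apply hπ, hE.not_cyclicBtw hπ⟩

end IsKreweras

theorem statement12_general (m N n : ℕ) (π : Equiv.Perm (Fin (2*m)))
    (hπ : IsNCPairing m π) (E : Fin (2*m) → Fin (2*m) → Prop) [DecidableRel E]
    (hE : IsKreweras m π E) (i : Fin (2*m) → ℤ) (hi : ∀ t, 1 ≤ i t ∧ i t ≤ (n : ℤ)) :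
    (∀ j k : Fin (2*m), π j = k →
        |i (cpred j) - i k| ≤ (N : ℤ) ∧ |i j - i (cpred k)| ≤ (N : ℤ)) ↔
    ∃! kj : (Fin (2*m) → ℤ) × (Fin (2*m) → ℤ),
      (∀ t, |kj.1 t| ≤ (N : ℤ)) ∧
      (∀ t, ∑ w ∈ Finset.univ.filter (fun w => E w t), kj.1 w = 0) ∧
      (∀ t, 1 ≤ kj.2 t ∧ kj.2 t ≤ (n : ℤ)) ∧
      (∀ j k : Fin (2*m), π j = k → kj.2 (cpred j) = kj.2 k ∧ kj.2 j = kj.2 (cpred k)) ∧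
      (∀ t, i t = kj.2 t + ∑ w ∈ Finset.univ.filter (fun w => E w t ∧ w ≤ t), kj.1 w) := by
  have habs : ∀ u v : ℤ, |u - v| ≤ N → |v - u| ≤ N := fun u v h => by rwa [abs_sub_comm]
  simp only [forall_pair_cpred_iff hπ.1 (R := Eq) (fun _ _ => Eq.symm),
    forall_pair_cpred_iff hπ.1 (R := fun u v => |u - v| ≤ (N : ℤ)) habs]
  set τ := krewerasPerm π
  have hτ : IsBlockCycle E τ := hE.isBlockCycle hπ
  have hEq : Equivalence E := hE.1
  constructor
  · intro hcat
    refine ⟨(fun w => i w - i (τ.symm w), fun t => i (blockMax hEq t)),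
      ⟨fun t => ?_, hτ.sum_filter_sub_symm_apply hEq i, fun t => hi _,
        fun x => congrArg i (blockMax_congr hEq (hτ.rel_apply x)), fun t => ?_⟩, ?_⟩
    · simpa [abs_sub_comm] using hcat (τ.symm t)
    · rw [hτ.sum_filter_le_sub_symm_apply hEq, add_sub_cancel]
    · rintro ⟨k, j⟩ ⟨-, hk, -, hj, hij⟩
      obtain ⟨rfl, rfl⟩ := hτ.eq_of_decomposition hEq hk hj hij
      rfl
  · rintro ⟨⟨k, j⟩, ⟨hkN, hk, -, hj, hij⟩, -⟩ x
    obtain ⟨rfl, -⟩ := hτ.eq_of_decomposition hEq hk hj hij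
    simpa [abs_sub_comm] using hkN (τ x)

/-- A tuple `i ∈ {1,…,n}^{2m}` is `N`-Catalan corresponding to a non-crossing pair
partition `σ` iff it decomposes uniquely as a `0`-Catalan tuple `j` plus cumulative
increments `k ∈ S(σ,N)` along the blocks of the Kreweras complement. -/
theorem statement12 (m N n : ℕ) (hm : 1 ≤ m) (π : Equiv.Perm (Fin (2*m)))
    (hπ : IsNCPairing m π) (E : Fin (2*m) → Fin (2*m) → Prop) [DecidableRel E]
    (hE : IsKreweras m π E) (i : Fin (2*m) → ℤ) (hi : ∀ t, 1 ≤ i t ∧ i t ≤ (n : ℤ)) :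
    (∀ j k : Fin (2*m), π j = k →
        |i (cpred j) - i k| ≤ (N : ℤ) ∧ |i j - i (cpred k)| ≤ (N : ℤ)) ↔
    ∃! kj : (Fin (2*m) → ℤ) × (Fin (2*m) → ℤ),
      (∀ t, |kj.1 t| ≤ (N : ℤ)) ∧
      (∀ t, ∑ w ∈ Finset.univ.filter (fun w => E w t), kj.1 w = 0) ∧
      (∀ t, 1 ≤ kj.2 t ∧ kj.2 t ≤ (n : ℤ)) ∧
      (∀ j k : Fin (2*m), π j = k → kj.2 (cpred j) = kj.2 k ∧ kj.2 j = kj.2 (cpred k)) ∧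
      (∀ t, i t = kj.2 t + ∑ w ∈ Finset.univ.filter (fun w => E w t ∧ w ≤ t), kj.1 w) :=
  statement12_general m N n π hπ E hE i hi
end

section
/- A tuple i ∈ ℕ^{2m} is 0-Catalan corresponding to σ ∈ NC₂(2m) (i.e. i_{j−1} = i_k and i_j = i_{k−1} whenever (j,k) ∈ σ, with i₀ := i_{2m}) if and only if i is constant on every block of the Kreweras complement of σ, i.e. i_{v₁^u} = … = i_{v_{l_u}^u} for each Kreweras block V_u = {v₁^u,…,v_{l_u}^u}. -/
/-- "Same side of every chord" relation on the barred points. -/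
def Esep {m : ℕ} (π : Equiv.Perm (Fin (2*m))) (s t : Fin (2*m)) : Prop :=
  ∀ a b : Fin (2*m), π a = b → a.val < b.val →
    ((a.val ≤ s.val ∧ s.val < b.val) ↔ (a.val ≤ t.val ∧ t.val < b.val))

lemma esep_equiv {m : ℕ} (π : Equiv.Perm (Fin (2*m))) : Equivalence (Esep π) :=
  ⟨fun _ _ _ _ _ => Iff.rfl,
   fun h a b hab hlt => (h a b hab hlt).symm,
   fun h1 h2 a b hab hlt => (h1 a b hab hlt).trans (h2 a b hab hlt)⟩

/-- Value of `cpred`. -/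
lemma cpred_val_s13 {m : ℕ} (y : Fin (2*m)) :
    (y.val = 0 ∧ (cpred y).val = 2*m - 1) ∨ (1 ≤ y.val ∧ (cpred y).val = y.val - 1) := by
  have hy := y.isLt
  rcases Nat.eq_zero_or_pos y.val with h | h
  · left
    refine ⟨h, ?_⟩
    simp only [cpred, h, Nat.zero_add]
    exact Nat.mod_eq_of_lt (by omega)
  · right
    refine ⟨h, ?_⟩
    simp only [cpred]
    have heq : y.val + 2*m - 1 = (y.val - 1) + 2*m := by omega
    rw [heq, Nat.add_mod_right]
    exact Nat.mod_eq_of_lt (by omega)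

section Main

variable {m : ℕ} (π : Equiv.Perm (Fin (2*m)))

/-- key lemma: `x̄` and the bar of `cpred (π x)` lie on the same side of every chord. -/
lemma esep_pred (hinv : ∀ j, π (π j) = j) (hfpf : ∀ j, π j ≠ j)
    (hncx : ∀ a b c d : Fin (2*m), a.val < b.val → b.val < c.val → c.val < d.val →
      π a = c → π b = d → False)
    (x : Fin (2*m)) : Esep π x (cpred (π x)) := by
  intro a b hab hlt
  set y := π x with hy
  have hyx : π y = x := hinv x
  have hxy : x ≠ y := fun h => hfpf x (hy ▸ h.symm)
  have hcval := cpred_val_s13 y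
  have hxlt := x.isLt
  have hylt := y.isLt
  have halt := a.isLt
  have hblt := b.isLt
  by_cases hax : a = x
  · have hby : b = y := by rw [← hab, hax, hy]
    subst hax; subst hby
    omega
  · by_cases hay : a = y
    · have hbx : b = x := by rw [← hab, hay, hyx]
      subst hay; subst hbx
      omega
    · have hna : a.val ≠ x.val := fun h => hax (Fin.ext h)
      have hna' : a.val ≠ y.val := fun h => hay (Fin.ext h)
      have hbnex : b ≠ x := by
        intro h
        apply hay
        have : π b = π x := by rw [h]
        rw [← hab, hinv a] at this
        rw [hy]; exact this
      have hbney : b ≠ y := by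
        intro h
        apply hax
        have : π b = π y := by rw [h]
        rw [← hab, hinv a, hyx] at this
        exact this
      have hnb : b.val ≠ x.val := fun h => hbnex (Fin.ext h)
      have hnb' : b.val ≠ y.val := fun h => hbney (Fin.ext h)
      have hnxy : x.val ≠ y.val := fun h => hxy (Fin.ext h)
      have h3 : ¬(a.val < x.val ∧ x.val < b.val ∧ b.val < y.val) :=
        fun ⟨u1, u2, u3⟩ => hncx a x b y u1 u2 u3 hab hy.symm
      have h4 : ¬(x.val < a.val ∧ a.val < y.val ∧ y.val < b.val) :=
        fun ⟨u1, u2, u3⟩ => hncx x a y b u1 u2 u3 hy.symm hab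
      have h5 : ¬(a.val < y.val ∧ y.val < b.val ∧ b.val < x.val) :=
        fun ⟨u1, u2, u3⟩ => hncx a y b x u1 u2 u3 hab hyx
      have h6 : ¬(y.val < a.val ∧ a.val < x.val ∧ x.val < b.val) :=
        fun ⟨u1, u2, u3⟩ => hncx y a x b u1 u2 u3 hyx hab
      omega

/-- The relation `Esep` makes the combined partition non-crossing. -/
lemma nc_esep (hncx : ∀ a b c d : Fin (2*m), a.val < b.val → b.val < c.val → c.val < d.val →
      π a = c → π b = d → False) : CombinedNC m π (Esep π) := by
  rintro ⟨p1, bp⟩ ⟨q1, bq⟩ ⟨r1, br⟩ ⟨s1, bs⟩ h1 h2 h3 hpr hqs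
  cases bp <;> cases bq <;> cases br <;> cases bs <;>
    first
      | exact hpr.elim
      | exact hqs.elim
      | skip
  · -- all unbarred
    simp only [interPos] at h1 h2 h3; norm_num at h1 h2 h3
    rcases hpr with h | h
    · exact absurd (congrArg Fin.val h) (by omega)
    · rcases hqs with h' | h'
      · exact absurd (congrArg Fin.val h') (by omega)
      · exact False.elim (hncx p1 q1 r1 s1 (by omega) (by omega) (by omega) h h')
  · -- p,r unbarred; q,s barred
    simp only [interPos] at h1 h2 h3; norm_num at h1 h2 h3
    rcases hpr with h | h
    · exact absurd (congrArg Fin.val h) (by omega)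
    · have hlt : p1.val < r1.val := by omega
      have := (hqs p1 r1 h hlt).mp ⟨by omega, by omega⟩
      exact False.elim (by omega)
  · -- p,r barred; q,s unbarred
    simp only [interPos] at h1 h2 h3; norm_num at h1 h2 h3
    rcases hqs with h | h
    · exact absurd (congrArg Fin.val h) (by omega)
    · have hlt : q1.val < s1.val := by omega
      have := (hpr q1 s1 h hlt).mpr ⟨by omega, by omega⟩
      exact False.elim (by omega)
  · -- all barred
    simp only [interPos] at h1 h2 h3; norm_num at h1 h2 h3
    intro a b hab hlt
    have hp := hpr a b hab hlt
    have hq := hqs a b hab hlt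
    omega

/-- Kreweras complement is contained in `Esep`. -/
lemma e_sub_esep (E : Fin (2*m) → Fin (2*m) → Prop) (hE : IsKreweras m π E) :
    ∀ s t, E s t → Esep π s t := by
  obtain ⟨hEeq, hEnc, _⟩ := hE
  have haux : ∀ s t, E s t → ∀ a b : Fin (2*m), π a = b → a.val < b.val →
      a.val ≤ s.val → s.val < b.val → a.val ≤ t.val ∧ t.val < b.val := by
    intro s t hst a b hab hlt h1 h2
    by_contra hcon
    push_neg at hcon
    rcases Nat.lt_or_ge t.val a.val with hta | htb
    · exact hEnc (t, true) (a, false) (s, true) (b, false)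
        (by simp only [interPos]; norm_num; omega) (by simp only [interPos]; norm_num; omega)
        (by simp only [interPos]; norm_num; omega) (hEeq.symm hst) (Or.inr hab)
    · have hbt : b.val ≤ t.val := by
        rcases Nat.lt_or_ge t.val b.val with h | h
        · exact absurd h (by intro hh; exact absurd (hcon (by omega)) (by omega))
        · exact h
      exact hEnc (a, false) (s, true) (b, false) (t, true)
        (by simp only [interPos]; norm_num; omega) (by simp only [interPos]; norm_num; omega)
        (by simp only [interPos]; norm_num; omega) (Or.inr hab) hst
  intro s t hst a b hab hlt
  constructor
  · intro ⟨u1, u2⟩; exact haux s t hst a b hab hlt u1 u2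
  · intro ⟨u1, u2⟩; exact haux t s (hEeq.symm hst) a b hab hlt u1 u2

/-- Induction lemma: constancy on `Esep`-classes from the cyclic condition. -/
lemma key_ind (hinv : ∀ j, π (π j) = j) (hfpf : ∀ j, π j ≠ j)
    (hncx : ∀ a b c d : Fin (2*m), a.val < b.val → b.val < c.val → c.val < d.val →
      π a = c → π b = d → False)
    (i : Fin (2*m) → ℕ) (P : ∀ j, i (cpred j) = i (π j)) :
    ∀ n, ∀ s t : Fin (2*m), t.val - s.val ≤ n → s.val < t.val → Esep π s t → i s = i t := by
  intro n
  induction n with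
  | zero => intro s t h hlt _; omega
  | succ n ih =>
    intro s t hle hlt hst
    have h2m : s.val + 1 < 2*m := by have := t.isLt; omega
    set j : Fin (2*m) := ⟨s.val + 1, h2m⟩ with hj
    have hjval : j.val = s.val + 1 := rfl
    have hcp : cpred j = s := by
      apply Fin.ext
      rcases cpred_val_s13 j with ⟨h0, _⟩ | ⟨_, hv⟩
      · omega
      · omega
    set u := π j with hu
    have hinvu : π u = j := by rw [hu]; exact hinv j
    have hune : u ≠ j := by rw [hu]; exact hfpf j
    have hus : s.val < u.val := by
      by_contra hcon
      push_neg at hcon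
      have hlt2 : u.val < j.val := by omega
      have := (hst u j hinvu hlt2).mp ⟨by omega, by omega⟩
      omega
    have hju : j.val < u.val := by
      have : u.val ≠ s.val + 1 := fun h => hune (Fin.ext (by omega))
      omega
    have hut : u.val ≤ t.val := by
      by_contra hcon
      push_neg at hcon
      have := (hst j u hu.symm hju).mpr ⟨by omega, by omega⟩
      omega
    have hisu : i s = i u := by
      have := P j
      rw [hcp, ← hu] at this
      exact this
    have hEus : Esep π u s := by
      have h0 := esep_pred π hinv hfpf hncx u
      rw [hinvu, hcp] at h0
      exact h0
    have hEut : Esep π u t := (esep_equiv π).trans hEus hst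
    rcases Nat.eq_or_lt_of_le hut with h | h
    · rw [hisu]; congr 1; exact Fin.ext h
    · rw [hisu]; exact ih u t (by omega) h hEut

end Main

/-- A tuple is `0`-Catalan corresponding to a non-crossing pair partition `σ`
(i.e. `i_{j−1} = i_k` and `i_j = i_{k−1}` whenever `(j,k) ∈ σ`, cyclically) iff
it is constant on every block of the Kreweras complement of `σ`. -/
theorem statement13 (m : ℕ) (hm : 1 ≤ m) (π : Equiv.Perm (Fin (2*m)))
    (hπ : IsNCPairing m π) (E : Fin (2*m) → Fin (2*m) → Prop) (hE : IsKreweras m π E)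
    (i : Fin (2*m) → ℕ) :
    (∀ j k : Fin (2*m), π j = k → i (cpred j) = i k ∧ i j = i (cpred k)) ↔
    (∀ s t, E s t → i s = i t) := by
  obtain ⟨hinv, hfpf, hncx'⟩ := hπ
  have hncx : ∀ a b c d : Fin (2*m), a.val < b.val → b.val < c.val → c.val < d.val →
      π a = c → π b = d → False :=
    fun a b c d h1 h2 h3 h4 h5 => hncx' ⟨a, b, c, d, h1, h2, h3, h4, h5⟩
  constructor
  · intro hL s t hst
    have P : ∀ j, i (cpred j) = i (π j) := fun j => (hL j (π j) rfl).1
    have hsep := e_sub_esep π E hE s t hst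
    rcases lt_trichotomy s.val t.val with h | h | h
    · exact key_ind π hinv hfpf hncx i P (2*m) s t (by omega) h hsep
    · rw [Fin.ext h]
    · exact (key_ind π hinv hfpf hncx i P (2*m) t s (by omega) h
        ((esep_equiv π).symm hsep)).symm
  · intro hR j k hjk
    subst hjk
    obtain ⟨hEeq, hEnc, hEmax⟩ := hE
    have hsub : ∀ s t, Esep π s t → E s t :=
      hEmax (Esep π) (esep_equiv π) (nc_esep π hncx)
    constructor
    · have h1 : Esep π (π j) (cpred j) := by
        have h0 := esep_pred π hinv hfpf hncx (π j)
        rwa [hinv j] at h0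
      exact hR _ _ (hsub _ _ ((esep_equiv π).symm h1))
    · exact hR _ _ (hsub _ _ (esep_pred π hinv hfpf hncx j))
end

section
/- Let σ ∈ NC₂(2m) and (u,v) ∈ σ with u < v. In the Kreweras complement K(σ): (i) ū and \overline{v−1} lie in the same block, and that block is a subset of {ū, \overline{u+1},…,\overline{v−1}}; (ii) if u ≥ 2, then \overline{u−1} and v̄ lie in the same block and that block is disjoint from {ū,…,\overline{v−1}}; (iii) if u = 1, then \overline{2m} and v̄ lie in the same block, \overline{2m} is the maximal element of that block, and v̄ is its minimal element. -/
section KrewerasAux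
variable {m : ℕ} {π : Equiv.Perm (Fin (2*m))} {E : Fin (2*m) → Fin (2*m) → Prop}

private lemma hPA (hNC : CombinedNC m π E) {a b w x : Fin (2*m)}
    (hab : π a = b) (hwx : E w x) (h1 : a.val ≤ w.val) (h2 : w.val < b.val)
    (h3 : b.val ≤ x.val) : False :=
  hNC (a,false) (w,true) (b,false) (x,true)
    (by simp [interPos]; omega) (by simp [interPos]; omega) (by simp [interPos]; omega)
    (Or.inr hab) hwx

private lemma hPB (hNC : CombinedNC m π E) {w x a b : Fin (2*m)}
    (hwx : E w x) (hab : π a = b) (h1 : w.val < a.val) (h2 : a.val ≤ x.val)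
    (h3 : x.val < b.val) : False :=
  hNC (w,true) (a,false) (x,true) (b,false)
    (by simp [interPos]; omega) (by simp [interPos]; omega) (by simp [interPos]; omega)
    hwx (Or.inr hab)

private lemma hBB (hNC : CombinedNC m π E) {a b c d : Fin (2*m)}
    (h1 : a.val < b.val) (h2 : b.val < c.val) (h3 : c.val < d.val)
    (hac : E a c) (hbd : E b d) : E a b :=
  hNC (a,true) (b,true) (c,true) (d,true)
    (by simp [interPos]; omega) (by simp [interPos]; omega) (by simp [interPos]; omega)
    hac hbd

private lemma arcs (hinv : ∀ j, π (π j) = j)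
    (hcr : ¬ ∃ a b c d : Fin (2*m), a < b ∧ b < c ∧ c < d ∧ π a = c ∧ π b = d)
    {c d u v : Fin (2*m)} (hcd : π c = d) (huv : π u = v)
    (h1 : c.val < d.val) (h2 : u.val < v.val) :
    (c = u ∧ d = v) ∨ d.val < u.val ∨ v.val < c.val ∨
      (c.val < u.val ∧ v.val < d.val) ∨ (u.val < c.val ∧ d.val < v.val) := by
  by_cases hcu : c = u
  · exact Or.inl ⟨hcu, by rw [← hcd, hcu, huv]⟩
  · have hinj : ∀ x y : Fin (2*m), π x = π y → x = y := fun x y h => by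
      rw [← hinv x, h, hinv]
    have hcu' : c.val ≠ u.val := fun h => hcu (Fin.ext h)
    have hdv : d.val ≠ v.val := fun h =>
      hcu (hinj _ _ (by rw [hcd, huv]; exact Fin.ext h))
    have hdu : d.val ≠ u.val := by
      intro h
      have : c = v := by rw [← hinv c, hcd, Fin.ext h, huv]
      have := congrArg Fin.val this
      omega
    have hcv : c.val ≠ v.val := by
      intro h
      have : d = u := by rw [← hcd, Fin.ext h, ← huv, hinv]
      have := congrArg Fin.val this
      omega
    have ncross1 : ¬(c.val < u.val ∧ u.val < d.val ∧ d.val < v.val) := by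
      rintro ⟨x, y, z⟩
      exact hcr ⟨c, u, d, v, x, y, z, hcd, huv⟩
    have ncross2 : ¬(u.val < c.val ∧ c.val < v.val ∧ v.val < d.val) := by
      rintro ⟨x, y, z⟩
      exact hcr ⟨u, c, v, d, x, y, z, huv, hcd⟩
    omega

private lemma join_equiv (hEq : Equivalence E) (x y : Fin (2*m)) :
    Equivalence (fun i j => E i j ∨ (E i x ∧ E y j) ∨ (E i y ∧ E x j)) := by
  constructor
  · intro a; exact Or.inl (hEq.refl a)
  · rintro a b (h | ⟨h1, h2⟩ | ⟨h1, h2⟩)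
    · exact Or.inl (hEq.symm h)
    · exact Or.inr (Or.inr ⟨hEq.symm h2, hEq.symm h1⟩)
    · exact Or.inr (Or.inl ⟨hEq.symm h2, hEq.symm h1⟩)
  · rintro a b c (h | ⟨h1, h2⟩ | ⟨h1, h2⟩) (g | ⟨g1, g2⟩ | ⟨g1, g2⟩)
    · exact Or.inl (hEq.trans h g)
    · exact Or.inr (Or.inl ⟨hEq.trans h g1, g2⟩)
    · exact Or.inr (Or.inr ⟨hEq.trans h g1, g2⟩)
    · exact Or.inr (Or.inl ⟨h1, hEq.trans h2 g⟩)
    · exact Or.inl (hEq.trans (hEq.trans h1 (hEq.symm (hEq.trans h2 g1))) g2)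
    · exact Or.inl (hEq.trans h1 g2)
    · exact Or.inr (Or.inr ⟨h1, hEq.trans h2 g⟩)
    · exact Or.inl (hEq.trans h1 g2)
    · exact Or.inl (hEq.trans (hEq.trans h1 (hEq.symm (hEq.trans h2 g1))) g2)

private lemma join1NC (hEq : Equivalence E) (hNC : CombinedNC m π E)
    (hinv : ∀ j, π (π j) = j)
    (hcr : ¬ ∃ a b c d : Fin (2*m), a < b ∧ b < c ∧ c < d ∧ π a = c ∧ π b = d)
    {u v t : Fin (2*m)} (huv : π u = v) (hlt : u.val < v.val) (ht : t.val = v.val - 1)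
    (Cu : ∀ w, E u w → u.val ≤ w.val ∧ w.val < v.val)
    (Ct : ∀ w, E t w → u.val ≤ w.val ∧ w.val < v.val) :
    CombinedNC m π (fun i j => E i j ∨ (E i u ∧ E t j) ∨ (E i t ∧ E u j)) := by
  intro p q r s h1 h2 h3 hpr hqs
  obtain ⟨pi, pb⟩ := p
  obtain ⟨qi, qb⟩ := q
  obtain ⟨ri, rb⟩ := r
  obtain ⟨si, sb⟩ := s
  cases pb <;> cases rb <;> try exact False.elim hpr
  all_goals cases qb <;> cases sb <;> try exact False.elim hqs
  -- FFFF
  · exact hNC (pi,false) (qi,false) (ri,false) (si,false) h1 h2 h3 hpr hqs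
  -- FFTT
  · have n1 : 2*pi.val + 0 < 2*qi.val + 1 := h1
    have n2 : 2*qi.val + 1 < 2*ri.val + 0 := h2
    have n3 : 2*ri.val + 0 < 2*si.val + 1 := h3
    have hpr' : pi = ri ∨ π pi = ri := hpr
    have hqs' : E qi si ∨ (E qi u ∧ E t si) ∨ (E qi t ∧ E u si) := hqs
    rcases hpr' with he | harc
    · exact False.elim (by have := congrArg Fin.val he; omega)
    · rcases hqs' with hold | ⟨hq1, hq2⟩ | ⟨hq1, hq2⟩
      · exact hNC (pi,false) (qi,true) (ri,false) (si,true) h1 h2 h3 (Or.inr harc) hold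
      · have cq := Cu qi (hEq.symm hq1)
        have cs := Ct si hq2
        rcases arcs hinv hcr harc huv (by omega) hlt with ⟨e1, e2⟩ | hl | hl | ⟨l1, l2⟩ | ⟨l1, l2⟩
        · exact False.elim (by have := congrArg Fin.val e2; omega)
        · exact False.elim (by omega)
        · exact False.elim (by omega)
        · exact False.elim (by omega)
        · exact False.elim (hPB hNC (hEq.symm hq1) harc l1 (by omega) (by omega))
      · have cq := Ct qi (hEq.symm hq1)
        have cs := Cu si hq2
        rcases arcs hinv hcr harc huv (by omega) hlt with ⟨e1, e2⟩ | hl | hl | ⟨l1, l2⟩ | ⟨l1, l2⟩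
        · exact False.elim (by have := congrArg Fin.val e2; omega)
        · exact False.elim (by omega)
        · exact False.elim (by omega)
        · exact False.elim (by omega)
        · exact False.elim (hPA hNC harc hq1 (by omega) (by omega) (by omega))
  -- TTFF
  · have n1 : 2*pi.val + 1 < 2*qi.val + 0 := h1
    have n2 : 2*qi.val + 0 < 2*ri.val + 1 := h2
    have n3 : 2*ri.val + 1 < 2*si.val + 0 := h3
    have hqs' : qi = si ∨ π qi = si := hqs
    have hpr' : E pi ri ∨ (E pi u ∧ E t ri) ∨ (E pi t ∧ E u ri) := hpr
    rcases hqs' with he | harc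
    · exact False.elim (by have := congrArg Fin.val he; omega)
    · rcases hpr' with hold | ⟨hp1, hp2⟩ | ⟨hp1, hp2⟩
      · exact hNC (pi,true) (qi,false) (ri,true) (si,false) h1 h2 h3 hold (Or.inr harc)
      · have cp := Cu pi (hEq.symm hp1)
        have cr := Ct ri hp2
        rcases arcs hinv hcr harc huv (by omega) hlt with ⟨e1, e2⟩ | hl | hl | ⟨l1, l2⟩ | ⟨l1, l2⟩
        · exact False.elim (by have := congrArg Fin.val e1; omega)
        · exact False.elim (by omega)
        · exact False.elim (by omega)
        · exact False.elim (by omega)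
        · exact False.elim (hPA hNC harc (hEq.symm hp2) (by omega) (by omega) (by omega))
      · have cp := Ct pi (hEq.symm hp1)
        have cr := Cu ri hp2
        rcases arcs hinv hcr harc huv (by omega) hlt with ⟨e1, e2⟩ | hl | hl | ⟨l1, l2⟩ | ⟨l1, l2⟩
        · exact False.elim (by have := congrArg Fin.val e1; omega)
        · exact False.elim (by omega)
        · exact False.elim (by omega)
        · exact False.elim (by omega)
        · exact False.elim (hPB hNC hp2 harc l1 (by omega) (by omega))
  -- TTTT
  · have n1 : 2*pi.val + 1 < 2*qi.val + 1 := h1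
    have n2 : 2*qi.val + 1 < 2*ri.val + 1 := h2
    have n3 : 2*ri.val + 1 < 2*si.val + 1 := h3
    have hpr' : E pi ri ∨ (E pi u ∧ E t ri) ∨ (E pi t ∧ E u ri) := hpr
    have hqs' : E qi si ∨ (E qi u ∧ E t si) ∨ (E qi t ∧ E u si) := hqs
    show E pi qi ∨ (E pi u ∧ E t qi) ∨ (E pi t ∧ E u qi)
    rcases hpr' with hold | ⟨hp1, hp2⟩ | ⟨hp1, hp2⟩ <;>
      rcases hqs' with qold | ⟨hq1, hq2⟩ | ⟨hq1, hq2⟩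
    · exact Or.inl (hBB hNC (by omega) (by omega) (by omega) hold qold)
    · have ca := Cu qi (hEq.symm hq1)
      have cb := Ct si hq2
      rcases Nat.lt_trichotomy pi.val u.val with hx | hx | hx
      · exact False.elim (hPB hNC hold huv hx (by omega) (by omega))
      · exact Or.inl (by rw [show pi = u from Fin.ext hx]; exact hEq.symm hq1)
      · have h5 : E u pi := hBB hNC hx (by omega) (by omega) (hEq.symm hq1) hold
        exact Or.inl (hEq.trans (hEq.symm h5) (hEq.symm hq1))
    · have cb := Cu si hq2
      exact Or.inl (hBB hNC (by omega) (by omega) (by omega) hold hq1)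
    · have cp := Cu pi (hEq.symm hp1)
      have cr := Ct ri hp2
      by_cases hbv : v.val ≤ si.val
      · exact False.elim (hPA hNC huv qold (by omega) (by omega) hbv)
      · by_cases hbt : si.val = t.val
        · have hst : si = t := Fin.ext hbt
          exact Or.inr (Or.inl ⟨hp1, hEq.symm (hst ▸ qold)⟩)
        · have h5 : E qi ri := hBB hNC (by omega) (by omega) (by omega) qold (hEq.symm hp2)
          exact Or.inr (Or.inl ⟨hp1, hEq.symm (hEq.trans h5 (hEq.symm hp2))⟩)
    · exact Or.inl (hEq.trans hp1 (hEq.symm hq1))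
    · exact Or.inr (Or.inl ⟨hp1, hEq.symm hq1⟩)
    · have cp := Ct pi (hEq.symm hp1)
      have h5 : E u qi := hBB hNC (by omega) (by omega) (by omega) hp2 qold
      exact Or.inr (Or.inr ⟨hp1, h5⟩)
    · exact Or.inr (Or.inr ⟨hp1, hEq.symm hq1⟩)
    · exact Or.inl (hEq.trans hp1 (hEq.symm hq1))

private lemma join2NC (hEq : Equivalence E) (hNC : CombinedNC m π E)
    (hinv : ∀ j, π (π j) = j)
    (hcr : ¬ ∃ a b c d : Fin (2*m), a < b ∧ b < c ∧ c < d ∧ π a = c ∧ π b = d)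
    {u v s0 : Fin (2*m)} (huv : π u = v) (hlt : u.val < v.val) (hu1 : 1 ≤ u.val)
    (hs0 : s0.val = u.val - 1)
    (Cs : ∀ w, E s0 w → w.val < u.val ∨ v.val ≤ w.val)
    (Cv : ∀ w, E v w → w.val < u.val ∨ v.val ≤ w.val) :
    CombinedNC m π (fun i j => E i j ∨ (E i s0 ∧ E v j) ∨ (E i v ∧ E s0 j)) := by
  intro p q r s h1 h2 h3 hpr hqs
  obtain ⟨pi, pb⟩ := p
  obtain ⟨qi, qb⟩ := q
  obtain ⟨ri, rb⟩ := r
  obtain ⟨si, sb⟩ := s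
  cases pb <;> cases rb <;> try exact False.elim hpr
  all_goals cases qb <;> cases sb <;> try exact False.elim hqs
  · exact hNC (pi,false) (qi,false) (ri,false) (si,false) h1 h2 h3 hpr hqs
  -- FFTT
  · have n1 : 2*pi.val + 0 < 2*qi.val + 1 := h1
    have n2 : 2*qi.val + 1 < 2*ri.val + 0 := h2
    have n3 : 2*ri.val + 0 < 2*si.val + 1 := h3
    have hpr' : pi = ri ∨ π pi = ri := hpr
    have hqs' : E qi si ∨ (E qi s0 ∧ E v si) ∨ (E qi v ∧ E s0 si) := hqs
    rcases hpr' with he | harc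
    · exact False.elim (by have := congrArg Fin.val he; omega)
    · rcases hqs' with hold | ⟨hq1, hq2⟩ | ⟨hq1, hq2⟩
      · exact hNC (pi,false) (qi,true) (ri,false) (si,true) h1 h2 h3 (Or.inr harc) hold
      · have ca := Cs qi (hEq.symm hq1)
        have cb := Cv si hq2
        rcases arcs hinv hcr harc huv (by omega) hlt with ⟨e1, e2⟩ | hl | hl | ⟨l1, l2⟩ | ⟨l1, l2⟩
        · exact False.elim (by
            have := congrArg Fin.val e1; have := congrArg Fin.val e2; omega)
        · exact False.elim (hPA hNC harc hq1 (by omega) (by omega) (by omega))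
        · exact False.elim (hPB hNC (hEq.symm hq1) harc (by omega) (by omega) (by omega))
        · exact False.elim (hPA hNC harc hq2 (by omega) (by omega) (by omega))
        · exact False.elim (by omega)
      · have ca := Cv qi (hEq.symm hq1)
        have cb := Cs si hq2
        rcases arcs hinv hcr harc huv (by omega) hlt with ⟨e1, e2⟩ | hl | hl | ⟨l1, l2⟩ | ⟨l1, l2⟩
        · exact False.elim (by
            have := congrArg Fin.val e1; have := congrArg Fin.val e2; omega)
        · exact False.elim (hPA hNC harc hq1 (by omega) (by omega) (by omega))
        · exact False.elim (hPB hNC (hEq.symm hq1) harc (by omega) (by omega) (by omega))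
        · exact False.elim (hPA hNC harc hq2 (by omega) (by omega) (by omega))
        · exact False.elim (by omega)
  -- TTFF
  · have n1 : 2*pi.val + 1 < 2*qi.val + 0 := h1
    have n2 : 2*qi.val + 0 < 2*ri.val + 1 := h2
    have n3 : 2*ri.val + 1 < 2*si.val + 0 := h3
    have hqs' : qi = si ∨ π qi = si := hqs
    have hpr' : E pi ri ∨ (E pi s0 ∧ E v ri) ∨ (E pi v ∧ E s0 ri) := hpr
    rcases hqs' with he | harc
    · exact False.elim (by have := congrArg Fin.val he; omega)
    · rcases hpr' with hold | ⟨hp1, hp2⟩ | ⟨hp1, hp2⟩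
      · exact hNC (pi,true) (qi,false) (ri,true) (si,false) h1 h2 h3 hold (Or.inr harc)
      · have cp := Cs pi (hEq.symm hp1)
        have cr := Cv ri hp2
        rcases arcs hinv hcr harc huv (by omega) hlt with ⟨e1, e2⟩ | hl | hl | ⟨l1, l2⟩ | ⟨l1, l2⟩
        · exact False.elim (by
            have := congrArg Fin.val e1; have := congrArg Fin.val e2; omega)
        · exact False.elim (hPA hNC harc (hEq.symm hp2) (by omega) (by omega) (by omega))
        · exact False.elim (hPB hNC hp2 harc (by omega) (by omega) (by omega))
        · exact False.elim (hPB hNC hp1 harc (by omega) (by omega) (by omega))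
        · exact False.elim (by omega)
      · have cp := Cv pi (hEq.symm hp1)
        have cr := Cs ri hp2
        rcases arcs hinv hcr harc huv (by omega) hlt with ⟨e1, e2⟩ | hl | hl | ⟨l1, l2⟩ | ⟨l1, l2⟩
        · exact False.elim (by
            have := congrArg Fin.val e1; have := congrArg Fin.val e2; omega)
        · exact False.elim (hPA hNC harc (hEq.symm hp2) (by omega) (by omega) (by omega))
        · exact False.elim (hPB hNC hp2 harc (by omega) (by omega) (by omega))
        · exact False.elim (hPB hNC hp1 harc (by omega) (by omega) (by omega))
        · exact False.elim (by omega)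
  -- TTTT
  · have n1 : 2*pi.val + 1 < 2*qi.val + 1 := h1
    have n2 : 2*qi.val + 1 < 2*ri.val + 1 := h2
    have n3 : 2*ri.val + 1 < 2*si.val + 1 := h3
    have hpr' : E pi ri ∨ (E pi s0 ∧ E v ri) ∨ (E pi v ∧ E s0 ri) := hpr
    have hqs' : E qi si ∨ (E qi s0 ∧ E v si) ∨ (E qi v ∧ E s0 si) := hqs
    show E pi qi ∨ (E pi s0 ∧ E v qi) ∨ (E pi v ∧ E s0 qi)
    rcases hpr' with hold | ⟨hp1, hp2⟩ | ⟨hp1, hp2⟩ <;>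
      rcases hqs' with qold | ⟨hq1, hq2⟩ | ⟨hq1, hq2⟩
    · exact Or.inl (hBB hNC (by omega) (by omega) (by omega) hold qold)
    · have ca := Cs qi (hEq.symm hq1)
      have cb := Cv si hq2
      by_cases hA : u.val ≤ pi.val ∧ pi.val < v.val
      · by_cases hB : u.val ≤ ri.val ∧ ri.val < v.val
        · exact False.elim (by omega)
        · exact False.elim (hPA hNC huv hold hA.1 hA.2 (by omega))
      · by_cases hB : u.val ≤ ri.val ∧ ri.val < v.val
        · exact False.elim (hPB hNC hold huv (by omega) (by omega) (by omega))
        · rcases ca with hqa | hqa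
          · rcases (show ri.val < u.val ∨ v.val ≤ ri.val by omega) with hr | hr
            · by_cases hrs : ri.val = s0.val
              · have h5 : E pi s0 := by rw [← show ri = s0 from Fin.ext hrs]; exact hold
                exact Or.inl (hEq.trans h5 (hEq.symm hq1))
              · exact Or.inl (hBB hNC (by omega) (by omega) (by omega) hold hq1)
            · by_cases hrv : ri.val = v.val
              · have h5 : E pi v := by rw [← show ri = v from Fin.ext hrv]; exact hold
                exact Or.inr (Or.inr ⟨h5, hEq.symm hq1⟩)
              · have h5 : E pi v := hBB hNC (by omega) (by omega) (by omega) hold hq2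
                exact Or.inr (Or.inr ⟨h5, hEq.symm hq1⟩)
          · rcases (show pi.val < u.val ∨ v.val ≤ pi.val by omega) with hp | hp
            · have h5 : E pi v := hBB hNC (by omega) (by omega) (by omega) hold hq2
              exact Or.inr (Or.inr ⟨h5, hEq.symm hq1⟩)
            · have h5 : E s0 pi := hBB hNC (by omega) (by omega) (by omega) (hEq.symm hq1) hold
              exact Or.inl (hEq.trans (hEq.symm h5) (hEq.symm hq1))
    · have ca := Cv qi (hEq.symm hq1)
      have cb := Cs si hq2
      by_cases hA : u.val ≤ pi.val ∧ pi.val < v.val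
      · by_cases hB : u.val ≤ ri.val ∧ ri.val < v.val
        · exact False.elim (by omega)
        · exact False.elim (hPA hNC huv hold hA.1 hA.2 (by omega))
      · by_cases hB : u.val ≤ ri.val ∧ ri.val < v.val
        · exact False.elim (hPB hNC hold huv (by omega) (by omega) (by omega))
        · rcases ca with hqa | hqa
          · rcases (show ri.val < u.val ∨ v.val ≤ ri.val by omega) with hr | hr
            · exact Or.inl (hBB hNC (by omega) (by omega) (by omega) hold hq1)
            · have h5 : E pi s0 := hBB hNC (by omega) (by omega) (by omega) hold hq2
              exact Or.inr (Or.inl ⟨h5, hEq.symm hq1⟩)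
          · rcases (show pi.val < u.val ∨ v.val ≤ pi.val by omega) with hp | hp
            · by_cases hps : pi.val = s0.val
              · have h5 : E pi s0 := by rw [show pi = s0 from Fin.ext hps]; exact hEq.refl s0
                exact Or.inr (Or.inl ⟨h5, hEq.symm hq1⟩)
              · have h5 : E pi s0 := hBB hNC (by omega) (by omega) (by omega) hold hq2
                exact Or.inr (Or.inl ⟨h5, hEq.symm hq1⟩)
            · by_cases hpv : pi.val = v.val
              · have h5 : E pi qi := by
                  rw [show pi = v from Fin.ext hpv]; exact hEq.symm hq1
                exact Or.inl h5
              · have h5 : E v pi := hBB hNC (by omega) (by omega) (by omega) (hEq.symm hq1) hold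
                exact Or.inl (hEq.trans (hEq.symm h5) (hEq.symm hq1))
    · have cp := Cs pi (hEq.symm hp1)
      have cr := Cv ri hp2
      by_cases hA : u.val ≤ qi.val ∧ qi.val < v.val
      · by_cases hB : u.val ≤ si.val ∧ si.val < v.val
        · exact False.elim (by omega)
        · exact False.elim (hPA hNC huv qold hA.1 hA.2 (by omega))
      · by_cases hB : u.val ≤ si.val ∧ si.val < v.val
        · exact False.elim (hPB hNC qold huv (by omega) (by omega) (by omega))
        · rcases cr with hr | hr
          · rcases (show si.val < u.val ∨ v.val ≤ si.val by omega) with hs | hs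
            · have h5 : E qi ri := hBB hNC (by omega) (by omega) (by omega) qold (hEq.symm hp2)
              have h6 : E v qi := hEq.symm (hEq.trans h5 (hEq.symm hp2))
              exact Or.inr (Or.inl ⟨hp1, h6⟩)
            · have h5 : E pi qi := hBB hNC (by omega) (by omega) (by omega) hp1 qold
              exact Or.inl h5
          · rcases (show qi.val < u.val ∨ v.val ≤ qi.val by omega) with hq | hq
            · by_cases hqs0 : qi.val = s0.val
              · exact Or.inl (show E pi qi by
                  rw [show qi = s0 from Fin.ext hqs0]; exact hp1)
              · have h5 : E pi qi := hBB hNC (by omega) (by omega) (by omega) hp1 qold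
                exact Or.inl h5
            · by_cases hqv : qi.val = v.val
              · exact Or.inr (Or.inl ⟨hp1, show E v qi by
                  rw [← show qi = v from Fin.ext hqv]; exact hEq.refl qi⟩)
              · have h5 : E v qi := hBB hNC (by omega) (by omega) (by omega) hp2 qold
                exact Or.inr (Or.inl ⟨hp1, h5⟩)
    · exact Or.inl (hEq.trans hp1 (hEq.symm hq1))
    · exact Or.inr (Or.inl ⟨hp1, hEq.symm hq1⟩)
    · have cp := Cv pi (hEq.symm hp1)
      have cr := Cs ri hp2
      by_cases hA : u.val ≤ qi.val ∧ qi.val < v.val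
      · by_cases hB : u.val ≤ si.val ∧ si.val < v.val
        · exact False.elim (by omega)
        · exact False.elim (hPA hNC huv qold hA.1 hA.2 (by omega))
      · by_cases hB : u.val ≤ si.val ∧ si.val < v.val
        · exact False.elim (hPB hNC qold huv (by omega) (by omega) (by omega))
        · rcases cr with hr | hr
          · rcases (show si.val < u.val ∨ v.val ≤ si.val by omega) with hs | hs
            · by_cases hss : si.val = s0.val
              · have h6 : E qi s0 := by rw [← show si = s0 from Fin.ext hss]; exact qold
                exact Or.inr (Or.inr ⟨hp1, hEq.symm h6⟩)
              · have h5 : E qi ri := hBB hNC (by omega) (by omega) (by omega) qold (hEq.symm hp2)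
                have h6 : E s0 qi := hEq.symm (hEq.trans h5 (hEq.symm hp2))
                exact Or.inr (Or.inr ⟨hp1, h6⟩)
            · by_cases hsv : si.val = v.val
              · have h6 : E qi v := by rw [← show si = v from Fin.ext hsv]; exact qold
                exact Or.inl (hEq.trans hp1 (hEq.symm h6))
              · have h5 : E pi qi := hBB hNC (by omega) (by omega) (by omega) hp1 qold
                exact Or.inl h5
          · rcases (show qi.val < u.val ∨ v.val ≤ qi.val by omega) with hq | hq
            · have h5 : E pi qi := hBB hNC (by omega) (by omega) (by omega) hp1 qold
              exact Or.inl h5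
            · have h5 : E s0 qi := hBB hNC (by omega) (by omega) (by omega) hp2 qold
              exact Or.inr (Or.inr ⟨hp1, h5⟩)
    · exact Or.inr (Or.inr ⟨hp1, hEq.symm hq1⟩)
    · exact Or.inl (hEq.trans hp1 (hEq.symm hq1))

private lemma join3NC (hEq : Equivalence E) (hNC : CombinedNC m π E)
    (hinv : ∀ j, π (π j) = j)
    (hcr : ¬ ∃ a b c d : Fin (2*m), a < b ∧ b < c ∧ c < d ∧ π a = c ∧ π b = d)
    {u v M : Fin (2*m)} (huv : π u = v) (hlt : u.val < v.val) (hu0 : u.val = 0)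
    (hM : M.val = 2*m - 1)
    (CM : ∀ w, E M w → v.val ≤ w.val)
    (Cv : ∀ w, E v w → v.val ≤ w.val) :
    CombinedNC m π (fun i j => E i j ∨ (E i M ∧ E v j) ∨ (E i v ∧ E M j)) := by
  intro p q r s h1 h2 h3 hpr hqs
  obtain ⟨pi, pb⟩ := p
  obtain ⟨qi, qb⟩ := q
  obtain ⟨ri, rb⟩ := r
  obtain ⟨si, sb⟩ := s
  have hb : pi.val < 2*m := pi.isLt
  have hb2 : si.val < 2*m := si.isLt
  cases pb <;> cases rb <;> try exact False.elim hpr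
  all_goals cases qb <;> cases sb <;> try exact False.elim hqs
  · exact hNC (pi,false) (qi,false) (ri,false) (si,false) h1 h2 h3 hpr hqs
  -- FFTT
  · have n1 : 2*pi.val + 0 < 2*qi.val + 1 := h1
    have n2 : 2*qi.val + 1 < 2*ri.val + 0 := h2
    have n3 : 2*ri.val + 0 < 2*si.val + 1 := h3
    have hrb : ri.val < 2*m := ri.isLt
    have hpr' : pi = ri ∨ π pi = ri := hpr
    have hqs' : E qi si ∨ (E qi M ∧ E v si) ∨ (E qi v ∧ E M si) := hqs
    rcases hpr' with he | harc
    · exact False.elim (by have := congrArg Fin.val he; omega)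
    · rcases hqs' with hold | ⟨hq1, hq2⟩ | ⟨hq1, hq2⟩
      · exact hNC (pi,false) (qi,true) (ri,false) (si,true) h1 h2 h3 (Or.inr harc) hold
      · have ca := CM qi (hEq.symm hq1)
        have cb := Cv si hq2
        rcases arcs hinv hcr harc huv (by omega) hlt with ⟨e1, e2⟩ | hl | hl | ⟨l1, l2⟩ | ⟨l1, l2⟩
        · exact False.elim (by
            have := congrArg Fin.val e1; have := congrArg Fin.val e2; omega)
        · exact False.elim (by omega)
        · exact False.elim (hPA hNC harc hq1 (by omega) (by omega) (by omega))
        · exact False.elim (by omega)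
        · exact False.elim (by omega)
      · have ca := Cv qi (hEq.symm hq1)
        have cb := CM si hq2
        rcases arcs hinv hcr harc huv (by omega) hlt with ⟨e1, e2⟩ | hl | hl | ⟨l1, l2⟩ | ⟨l1, l2⟩
        · exact False.elim (by
            have := congrArg Fin.val e1; have := congrArg Fin.val e2; omega)
        · exact False.elim (by omega)
        · exact False.elim (hPB hNC (hEq.symm hq1) harc (by omega) (by omega) (by omega))
        · exact False.elim (by omega)
        · exact False.elim (by omega)
  -- TTFF
  · have n1 : 2*pi.val + 1 < 2*qi.val + 0 := h1
    have n2 : 2*qi.val + 0 < 2*ri.val + 1 := h2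
    have n3 : 2*ri.val + 1 < 2*si.val + 0 := h3
    have hrb : ri.val < 2*m := ri.isLt
    have hqs' : qi = si ∨ π qi = si := hqs
    have hpr' : E pi ri ∨ (E pi M ∧ E v ri) ∨ (E pi v ∧ E M ri) := hpr
    rcases hqs' with he | harc
    · exact False.elim (by have := congrArg Fin.val he; omega)
    · rcases hpr' with hold | ⟨hp1, hp2⟩ | ⟨hp1, hp2⟩
      · exact hNC (pi,true) (qi,false) (ri,true) (si,false) h1 h2 h3 hold (Or.inr harc)
      · have cp := CM pi (hEq.symm hp1)
        have cr := Cv ri hp2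
        rcases arcs hinv hcr harc huv (by omega) hlt with ⟨e1, e2⟩ | hl | hl | ⟨l1, l2⟩ | ⟨l1, l2⟩
        · exact False.elim (by
            have := congrArg Fin.val e1; have := congrArg Fin.val e2; omega)
        · exact False.elim (by omega)
        · exact False.elim (hPB hNC hp2 harc (by omega) (by omega) (by omega))
        · exact False.elim (by omega)
        · exact False.elim (by omega)
      · have cp := Cv pi (hEq.symm hp1)
        have cr := CM ri hp2
        rcases arcs hinv hcr harc huv (by omega) hlt with ⟨e1, e2⟩ | hl | hl | ⟨l1, l2⟩ | ⟨l1, l2⟩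
        · exact False.elim (by
            have := congrArg Fin.val e1; have := congrArg Fin.val e2; omega)
        · exact False.elim (by omega)
        · exact False.elim (hPA hNC harc (hEq.symm hp2) (by omega) (by omega) (by omega))
        · exact False.elim (by omega)
        · exact False.elim (by omega)
  -- TTTT
  · have n1 : 2*pi.val + 1 < 2*qi.val + 1 := h1
    have n2 : 2*qi.val + 1 < 2*ri.val + 1 := h2
    have n3 : 2*ri.val + 1 < 2*si.val + 1 := h3
    have hpr' : E pi ri ∨ (E pi M ∧ E v ri) ∨ (E pi v ∧ E M ri) := hpr
    have hqs' : E qi si ∨ (E qi M ∧ E v si) ∨ (E qi v ∧ E M si) := hqs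
    show E pi qi ∨ (E pi M ∧ E v qi) ∨ (E pi v ∧ E M qi)
    rcases hpr' with hold | ⟨hp1, hp2⟩ | ⟨hp1, hp2⟩ <;>
      rcases hqs' with qold | ⟨hq1, hq2⟩ | ⟨hq1, hq2⟩
    · exact Or.inl (hBB hNC (by omega) (by omega) (by omega) hold qold)
    · have ca := CM qi (hEq.symm hq1)
      exact Or.inl (hBB hNC (by omega) (by omega) (by omega) hold hq1)
    · have ca := Cv qi (hEq.symm hq1)
      by_cases hpv : pi.val = v.val
      · exact Or.inl (show E pi qi by
          rw [show pi = v from Fin.ext hpv]; exact hEq.symm hq1)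
      · rcases (show pi.val < v.val ∨ v.val < pi.val by omega) with hp | hp
        · exact False.elim (hPA hNC huv hold (by omega) hp (by omega))
        · have h5 : E v pi := hBB hNC (by omega) (by omega) (by omega) (hEq.symm hq1) hold
          exact Or.inl (hEq.trans (hEq.symm h5) (hEq.symm hq1))
    · have cp := CM pi (hEq.symm hp1)
      have h5 : E v qi := hBB hNC (by omega) (by omega) (by omega) hp2 qold
      exact Or.inr (Or.inl ⟨hp1, h5⟩)
    · exact Or.inl (hEq.trans hp1 (hEq.symm hq1))
    · exact Or.inr (Or.inl ⟨hp1, hEq.symm hq1⟩)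
    · have cp := Cv pi (hEq.symm hp1)
      by_cases hsM : si.val = M.val
      · have h6 : E qi M := by rw [← show si = M from Fin.ext hsM]; exact qold
        exact Or.inr (Or.inr ⟨hp1, hEq.symm h6⟩)
      · have h5 : E qi ri := hBB hNC (by omega) (by omega) (by omega) qold (hEq.symm hp2)
        have h6 : E M qi := hEq.symm (hEq.trans h5 (hEq.symm hp2))
        exact Or.inr (Or.inr ⟨hp1, h6⟩)
    · exact Or.inr (Or.inr ⟨hp1, hEq.symm hq1⟩)
    · exact Or.inl (hEq.trans hp1 (hEq.symm hq1))

end KrewerasAux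

/-- Structure of the Kreweras complement around an arc `(u,v)` of `σ ∈ NC₂(2m)`
with `u < v` (0-indexed): (i) `ū` and `\overline{v−1}` lie in a common block which
is contained in `{ū,…,\overline{v−1}}`; (ii) if `u ≥ 1` then `\overline{u−1}` and
`v̄` lie in a common block which is disjoint from `{ū,…,\overline{v−1}}`;
(iii) if `u = 0` then `\overline{2m−1}` and `v̄` lie in a common block, of which
`\overline{2m−1}` is the maximal and `v̄` the minimal element. -/
theorem statement14 (m : ℕ) (hm : 1 ≤ m) (π : Equiv.Perm (Fin (2*m)))
    (hπ : IsNCPairing m π) (E : Fin (2*m) → Fin (2*m) → Prop) (hE : IsKreweras m π E)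
    (u v : Fin (2*m)) (huv : π u = v) (hlt : u < v) :
    (∃ w : Fin (2*m), w.val = v.val - 1 ∧ E u w) ∧
    (∀ w, E u w → u.val ≤ w.val ∧ w.val ≤ v.val - 1) ∧
    (1 ≤ u.val →
      (∃ w : Fin (2*m), w.val = u.val - 1 ∧ E w v) ∧
      ∀ w, E v w → ¬(u.val ≤ w.val ∧ w.val ≤ v.val - 1)) ∧
    (u.val = 0 →
      ∃ w : Fin (2*m), w.val = 2*m - 1 ∧ E w v ∧
        (∀ w', E w' w → w' ≤ w) ∧ (∀ w', E w' v → v ≤ w')) := by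
  obtain ⟨hinv, hfix, hcr⟩ := hπ
  obtain ⟨hEq, hNC, hmax⟩ := hE
  have hlt' : u.val < v.val := hlt
  have hv2 : v.val < 2*m := v.isLt
  have Cu : ∀ w, E u w → u.val ≤ w.val ∧ w.val < v.val := by
    intro w hw
    have hn1 : ¬ w.val < u.val := fun hx =>
      hPB hNC (hEq.symm hw) huv hx (le_refl _) hlt'
    have hn2 : ¬ v.val ≤ w.val := fun hx =>
      hPA hNC huv hw (le_refl _) hlt' hx
    omega
  have Ct : ∀ t : Fin (2*m), t.val = v.val - 1 →
      ∀ w, E t w → u.val ≤ w.val ∧ w.val < v.val := by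
    intro t ht w hw
    have hn1 : ¬ w.val < u.val := fun hx =>
      hPB hNC (hEq.symm hw) huv hx (by omega) (by omega)
    have hn2 : ¬ v.val ≤ w.val := fun hx =>
      hPA hNC huv hw (by omega) (by omega) hx
    omega
  have Cv : ∀ w, E v w → w.val < u.val ∨ v.val ≤ w.val := by
    intro w hw
    by_contra hx
    push_neg at hx
    exact hPA hNC huv (hEq.symm hw) (by omega) (by omega) (le_refl _)
  refine ⟨?_, ?_, ?_, ?_⟩
  · -- (i) existence
    refine ⟨⟨v.val - 1, by omega⟩, rfl, ?_⟩
    exact hmax _ (join_equiv hEq u ⟨v.val - 1, by omega⟩)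
      (join1NC hEq hNC hinv hcr huv hlt' rfl Cu (Ct _ rfl)) u _
      (Or.inr (Or.inl ⟨hEq.refl _, hEq.refl _⟩))
  · -- (i) confinement
    intro w hw
    have := Cu w hw
    omega
  · -- (ii)
    intro hu1
    have Cs : ∀ s0 : Fin (2*m), s0.val = u.val - 1 →
        ∀ w, E s0 w → w.val < u.val ∨ v.val ≤ w.val := by
      intro s0 hs0 w hw
      by_contra hx
      push_neg at hx
      exact hPB hNC hw huv (by omega) (by omega) (by omega)
    refine ⟨⟨⟨u.val - 1, by omega⟩, rfl, ?_⟩, ?_⟩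
    · exact hmax _ (join_equiv hEq ⟨u.val - 1, by omega⟩ v)
        (join2NC hEq hNC hinv hcr huv hlt' hu1 rfl (Cs _ rfl) Cv) _ v
        (Or.inr (Or.inl ⟨hEq.refl _, hEq.refl _⟩))
    · intro w hw hcon
      have := Cv w hw
      omega
  · -- (iii)
    intro hu0
    have CM : ∀ M : Fin (2*m), M.val = 2*m - 1 →
        ∀ w, E M w → v.val ≤ w.val := by
      intro M hM w hw
      by_contra hx
      push_neg at hx
      exact hPA hNC huv (hEq.symm hw) (by omega) (by omega) (by omega)
    have Cv' : ∀ w, E v w → v.val ≤ w.val := by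
      intro w hw
      have := Cv w hw
      omega
    refine ⟨⟨2*m - 1, by omega⟩, rfl, ?_, ?_, ?_⟩
    · exact hmax _ (join_equiv hEq ⟨2*m - 1, by omega⟩ v)
        (join3NC hEq hNC hinv hcr huv hlt' hu0 rfl (CM _ rfl) Cv') _ v
        (Or.inr (Or.inl ⟨hEq.refl _, hEq.refl _⟩))
    · intro w' _
      have := w'.isLt
      exact Fin.le_def.mpr (show w'.val ≤ 2*m - 1 by omega)
    · intro w' hw'
      exact Fin.le_def.mpr (Cv' w' (hEq.symm hw'))
end

section
/- Let R(u,v) = R(u,0)·R(0,v) with R(u,0) = R(0,u) and ∑_u |R(u,0)| < ∞. Let μ_r be the law of r(U) where r(x) = ∑_{k∈ℤ} R(k,0) e^{−ikx} and U is uniform on (−π,π), and μ_s the standard semicircle law on [−2,2]. Then for every m ≥ 1, the 2m-th moment of the free multiplicative convolution μ_r ⊠ μ_s equals β_{2m} := ∑_{σ∈NC₂(2m)} ∑_{k∈S(σ)} ∏_{(u,v)∈σ} R(k_u,0) R(k_v,0), using that ∫ x^j dμ_r = ∑_{k₁+…+k_j=0} ∏_i R(k_i,0) and the moment formula ∫ x^{2m}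 d(μ_r ⊠ μ_s) = ∑_{σ∈NC₂(2m)} ∏_{j=1}^{m+1} ∫ x^{l_j^σ} dμ_r, where l_j^σ are the Kreweras block sizes of σ. -/
open Finset

section TsumPi

variable {R : Type*} [NormedField R]

theorem summable_norm_prod_pi_fin : ∀ {n : ℕ} {β : Fin n → Type*} {f : ∀ i, β i → R},
    (∀ i, Summable fun y => ‖f i y‖) → Summable fun x : (∀ i, β i) => ‖∏ i, f i (x i)‖
  | 0, _, _, _ => Summable.of_finite
  | _ + 1, β, _, hf => by
    rw [← (Fin.consEquiv β).summable_iff]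
    refine ((hf 0).mul_norm (summable_norm_prod_pi_fin fun i => hf i.succ)).congr fun p => ?_
    simp [Fin.consEquiv, Fin.prod_univ_succ]

theorem tsum_prod_pi_fin [CompleteSpace R] : ∀ {n : ℕ} {β : Fin n → Type*} {f : ∀ i, β i → R},
    (∀ i, Summable fun y => ‖f i y‖) → ∑' x : (∀ i, β i), ∏ i, f i (x i) = ∏ i, ∑' y, f i y
  | 0, _, _, _ => by simp
  | _ + 1, β, f, hf => by
    rw [← (Fin.consEquiv β).tsum_eq, Fin.prod_univ_succ, ← tsum_prod_pi_fin fun i => hf i.succ,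
      tsum_mul_tsum_of_summable_norm (hf 0) (summable_norm_prod_pi_fin fun i => hf i.succ)]
    simp [Fin.consEquiv, Fin.prod_univ_succ]

theorem prod_piCongrLeft_apply {M ι κ : Type*} [CommMonoid M] [Fintype ι] [Fintype κ]
    {β : κ → Type*} (e : ι ≃ κ) (f : ∀ j, β j → M) (y : ∀ i, β (e i)) :
    ∏ j, f j (Equiv.piCongrLeft β e y j) = ∏ i, f (e i) (y i) := by
  rw [← e.prod_comp]
  simp

variable {ι : Type*} [Fintype ι] {β : ι → Type*} {f : ∀ i, β i → R}

theorem summable_norm_prod_pi (hf : ∀ i, Summable fun y => ‖f i y‖) :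
    Summable fun x : (∀ i, β i) => ‖∏ i, f i (x i)‖ := by
  let e := (Fintype.equivFin ι).symm
  rw [← (Equiv.piCongrLeft β e).summable_iff]
  simpa only [Function.comp_def, prod_piCongrLeft_apply] using
    summable_norm_prod_pi_fin fun i => hf (e i)

theorem tsum_prod_pi [CompleteSpace R] (hf : ∀ i, Summable fun y => ‖f i y‖) :
    ∑' x : (∀ i, β i), ∏ i, f i (x i) = ∏ i, ∑' y, f i y := by
  let e := (Fintype.equivFin ι).symm
  rw [← (Equiv.piCongrLeft β e).tsum_eq, ← e.prod_comp]
  simpa [prod_piCongrLeft_apply] using tsum_prod_pi_fin fun i => hf (e i)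

end TsumPi

theorem prod_filter_lt_mul_of_involutive {α M : Type*} [LinearOrder α] [Fintype α] [CommMonoid M]
    {σ : α → α} (hσ : Function.Involutive σ) (hfix : ∀ j, σ j ≠ j) (g : α → M) :
    ∏ j ∈ univ.filter (fun j => j < σ j), g j * g (σ j) = ∏ j, g j := by
  rw [prod_mul_distrib, ← prod_filter_mul_prod_filter_not univ (fun j => j < σ j)]
  congr 1
  refine prod_equiv hσ.toPerm (fun j => ?_) (fun _ _ => rfl)
  simp only [mem_filter, mem_univ, true_and, Function.Involutive.coe_toPerm, hσ j, not_lt]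
  exact ⟨le_of_lt, fun h => lt_of_le_of_ne h (hfix j).symm⟩

section ZeroSum

variable {G R : Type*} [AddCommMonoid G] [NormedField R]

theorem tsum_zero_sum_congr {β γ : Type*} [Fintype β] [Fintype γ] (e : β ≃ γ) (f : G → R) :
    ∑' k : {k : β → G // ∑ x, k x = 0}, ∏ x, f (k.1 x)
      = ∑' k : {k : γ → G // ∑ x, k x = 0}, ∏ x, f (k.1 x) := by
  rw [← (Equiv.subtypeEquiv (e.arrowCongr (Equiv.refl G)) fun k => ?_).tsum_eq]
  · exact tsum_congr fun k => (e.symm.prod_comp fun x => f (k.1 x)).symm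
  · simp [e.symm.sum_comp]

def piFiberEquiv {α ι : Type*} (G : Type*) (q : α → ι) : (α → G) ≃ ∀ b, ({x // q x = b} → G) where
  toFun k _ x := k x
  invFun g x := g (q x) ⟨x, rfl⟩
  left_inv _ := rfl
  right_inv g := by
    funext b ⟨x, hx⟩
    subst hx
    rfl

theorem tsum_zero_sum_fibers [CompleteSpace R] {α ι : Type*} [Fintype α] [Fintype ι]
    [DecidableEq ι] (q : α → ι) {f : G → R} (hf : Summable fun g => ‖f g‖) :
    ∑' k : {k : α → G // ∀ b, ∑ x : {x // q x = b}, k x = 0}, ∏ x, f (k.1 x)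
      = ∏ b, ∑' k : {k : {x // q x = b} → G // ∑ x, k x = 0}, ∏ x, f (k.1 x) := by
  let E : {k : α → G // ∀ b, ∑ x : {x // q x = b}, k x = 0}
      ≃ ∀ b, {k : {x // q x = b} → G // ∑ x, k x = 0} :=
    (Equiv.subtypeEquiv (piFiberEquiv G q) fun _ => Iff.rfl).trans
      (Equiv.subtypePiEquivPi (p := fun _ k => ∑ x, k x = 0))
  have hsum (b : ι) : Summable fun k : {k : {x // q x = b} → G // ∑ x, k x = 0} =>
      ‖∏ x, f (k.1 x)‖ :=
    (summable_norm_prod_pi fun _ => hf).comp_injective Subtype.val_injective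
  rw [← E.symm.tsum_eq, ← tsum_prod_pi hsum]
  refine tsum_congr fun k => ?_
  rw [← Fintype.prod_fiberwise q]
  refine prod_congr rfl fun b _ => prod_congr rfl fun ⟨x, hx⟩ _ => ?_
  subst hx
  rfl

end ZeroSum

theorem tsum_zero_sum_classes {G R : Type*} [AddCommMonoid G] [NormedField R] [CompleteSpace R]
    {α : Type*} [Fintype α] [DecidableEq α] {r : α → α → Prop} [DecidableRel r]
    (hr : Equivalence r) {f : G → R} (hf : Summable fun g => ‖f g‖) :
    ∑' k : {k : α → G // ∀ t, ∑ w ∈ univ.filter (r · t), k w = 0}, ∏ x, f (k.1 x)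
      = ∏ b ∈ univ.image (fun t => univ.filter (r · t)),
          ∑' k : {k : Fin b.card → G // ∑ i, k i = 0}, ∏ i, f (k.1 i) := by
  set cls : α → Finset α := fun t => univ.filter (r · t)
  let q : α → univ.image cls := fun x => ⟨cls x, mem_image_of_mem _ (mem_univ x)⟩
  have hq_surj : Function.Surjective q := by
    rintro ⟨b, hb⟩
    obtain ⟨t, -, rfl⟩ := mem_image.mp hb
    exact ⟨t, rfl⟩
  have hq (t x : α) : q x = q t ↔ x ∈ cls t := by
    rw [Subtype.ext_iff]
    change cls x = cls t ↔ _
    refine ⟨fun h => h ▸ mem_filter.mpr ⟨mem_univ x, hr.refl x⟩, fun hxt => ?_⟩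
    ext w
    simp only [cls, mem_filter, mem_univ, true_and] at hxt ⊢
    exact ⟨fun hwx => hr.trans hwx hxt, fun hwt => hr.trans hwt (hr.symm hxt)⟩
  have hfiber (b : univ.image cls) (x : α) : q x = b ↔ x ∈ b.1 := by
    obtain ⟨t, rfl⟩ := hq_surj b
    exact hq t x
  have hconstraint (k : α → G) :
      (∀ t, ∑ w ∈ cls t, k w = 0) ↔ ∀ b, ∑ x : {x // q x = b}, k x = 0 := by
    rw [hq_surj.forall]
    exact forall_congr' fun t => by rw [sum_subtype (cls t) fun x => (hq t x).symm]
  calc _ = ∑' k : {k : α → G // ∀ b, ∑ x : {x // q x = b}, k x = 0}, ∏ x, f (k.1 x) :=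
        (Equiv.subtypeEquivRight hconstraint).tsum_eq fun k => ∏ x, f (k.1 x)
    _ = ∏ b : univ.image cls, ∑' k : {k : Fin b.1.card → G // ∑ i, k i = 0}, ∏ i, f (k.1 i) := by
        rw [tsum_zero_sum_fibers q hf]
        exact prod_congr rfl fun b _ => tsum_zero_sum_congr
          ((Equiv.subtypeEquivRight (hfiber b)).trans b.1.equivFin) f
    _ = _ := prod_coe_sort _ fun b : Finset α =>
        ∑' k : {k : Fin b.card → G // ∑ i, k i = 0}, ∏ i, f (k.1 i)

open scoped Classical in
theorem statement18_general (R : ℤ → ℤ → ℝ)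
    (hsum : Summable fun k : ℤ => |R k 0|)
    (m : ℕ)
    (K : Equiv.Perm (Fin (2*m)) → (Fin (2*m) → Fin (2*m) → Prop))
    (hK : ∀ π, IsNCPairing m π → IsKreweras m π (K π))
    (mom : ℕ → ℝ)
    (hmom : ∀ j : ℕ, mom j =
      ∑' k : {k : Fin j → ℤ // ∑ i, k i = 0}, ∏ i, R (k.1 i) 0) :
    ∑ π ∈ Finset.univ.filter (fun π : Equiv.Perm (Fin (2*m)) => IsNCPairing m π),
      ∏ b ∈ Finset.univ.image (fun t => Finset.univ.filter (fun w => K π w t)),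
        mom b.card
    = ∑ π ∈ Finset.univ.filter (fun π : Equiv.Perm (Fin (2*m)) => IsNCPairing m π),
        ∑' k : {k : Fin (2*m) → ℤ //
            ∀ t, ∑ w ∈ Finset.univ.filter (fun w => K π w t), k w = 0},
          ∏ j ∈ Finset.univ.filter (fun j => j < π j),
            R (k.1 j) 0 * R (k.1 (π j)) 0 := by
  refine sum_congr rfl fun π hπ => ?_
  have hNC : IsNCPairing m π := (mem_filter.mp hπ).2
  calc _ = ∑' k : {k : Fin (2*m) → ℤ // ∀ t, ∑ w ∈ univ.filter (K π · t), k w = 0},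
        ∏ i, R (k.1 i) 0 := by
        simp only [hmom]
        exact (tsum_zero_sum_classes (hK π hNC).1 (f := fun u => R u 0) hsum).symm
    _ = _ := tsum_congr fun k =>
        (prod_filter_lt_mul_of_involutive hNC.1 hNC.2.1 fun i => R (k.1 i) 0).symm

open scoped Classical in
/-- When `R(u,v) = R(u,0)R(0,v)` with `R(·,0)` symmetric and absolutely summable,
the `2m`-th moment of `μ_r ⊠ μ_s`, computed via the moment formula
`∫x^{2m} d(μ_r ⊠ μ_s) = ∑_{σ∈NC₂(2m)} ∏_j ∫ x^{l_j^σ} dμ_r` (taken as given, with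
`∫ x^j dμ_r = ∑_{k₁+⋯+k_j=0} ∏_i R(k_i,0)` and `l_j^σ` the Kreweras block sizes),
equals `β_{2m} = ∑_{σ∈NC₂(2m)} ∑_{k∈S(σ)} ∏_{(u,v)∈σ} R(k_u,0)R(k_v,0)`. -/
theorem statement18 (R : ℤ → ℤ → ℝ)
    (hsum : Summable fun k : ℤ => |R k 0|)
    (hprod : ∀ u v : ℤ, R u v = R u 0 * R 0 v)
    (hsymm : ∀ u : ℤ, R u 0 = R 0 u)
    (m : ℕ) (hm : 1 ≤ m)
    (K : Equiv.Perm (Fin (2*m)) → (Fin (2*m) → Fin (2*m) → Prop))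
    (hK : ∀ π, IsNCPairing m π → IsKreweras m π (K π))
    (mom : ℕ → ℝ)
    (hmom : ∀ j : ℕ, mom j =
      ∑' k : {k : Fin j → ℤ // ∑ i, k i = 0}, ∏ i, R (k.1 i) 0) :
    ∑ π ∈ Finset.univ.filter (fun π : Equiv.Perm (Fin (2*m)) => IsNCPairing m π),
      ∏ b ∈ Finset.univ.image (fun t => Finset.univ.filter (fun w => K π w t)),
        mom b.card
    = ∑ π ∈ Finset.univ.filter (fun π : Equiv.Perm (Fin (2*m)) => IsNCPairing m π),
        ∑' k : {k : Fin (2*m) → ℤ //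
            ∀ t, ∑ w ∈ Finset.univ.filter (fun w => K π w t), k w = 0},
          ∏ j ∈ Finset.univ.filter (fun j => j < π j),
            R (k.1 j) 0 * R (k.1 (π j)) 0 :=
  statement18_general R hsum m K hK mom hmom
end
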